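/- arXiv:1404.1404 — 6 statements merged into one kernel-verified Lean document; each statement's English description precedes it below -/
import Mathlib

section
/- Let A, B, C, Y be Polish (complete separable metric) spaces, let ν be a nonnegative countably additive Borel measure on Y, and let η : A × Y → [0,∞) be a function such that the pair (η, ν) satisfies Condition C1 and ∫_Y η(a,y) ν(dy) = 1 for every a ∈ A. Let g : A × B × C → ℝ be bounded and uniformly continuous. For each Markov kernel κ from Y to B define f_κ : A × C → ℝ by f_κ(a,c) = ∫_Y (∫_B g(a,b,c) κ(y)(db)) η(a,y) ν(dy). Then the family {f_κ : κ a Markov kernel from Y to B} is uniformly bounded by sup|g| and is uniformly equicontinuous on A × C (with the product metric). -/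
open MeasureTheory ProbabilityTheory Filter Topology TopologicalSpace
open scoped ENNReal NNReal

noncomputable section

/-- Condition **C1** of the paper: the pair `(η, ν)` consists of a jointly continuous
function `η` together with a "variation control" function `h` which is bounded, has
uniformly bounded `ν`-integrals, and controls the variation of `η` in its first
argument uniformly. -/
def CondC1 {A Y : Type*} [PseudoMetricSpace A] [MeasurableSpace A] [TopologicalSpace Y] [MeasurableSpace Y]
    (η : A → Y → ℝ) (ν : Measure Y) : Prop :=
  Continuous (fun p : A × Y => η p.1 p.2) ∧
  ∃ h : A → Y → ℝ,
    (∀ a y, 0 ≤ h a y) ∧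
    Measurable (fun p : A × Y => h p.1 p.2) ∧
    (∃ Cb : ℝ, ∀ a y, h a y ≤ Cb) ∧
    (∃ M : ℝ≥0∞, M ≠ ⊤ ∧ ∀ a, (∫⁻ y, ENNReal.ofReal (h a y) ∂ν) ≤ M) ∧
    (∀ ε : ℝ, 0 < ε → ∃ δ : ℝ, 0 < δ ∧
      ∀ a₀ a : A, dist a a₀ < δ → ∀ y, |η a y - η a₀ y| < ε * h a₀ y)

/-- The family `{f_κ}` over all Markov kernels `κ : Y → P(B)` is uniformly bounded by
`sup |g|` and uniformly equicontinuous on `A × C`. -/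
theorem stmt_0
    {A B C Y : Type*}
    [MetricSpace A] [CompleteSpace A] [SeparableSpace A] [MeasurableSpace A] [BorelSpace A]
    [MetricSpace B] [CompleteSpace B] [SeparableSpace B] [MeasurableSpace B] [BorelSpace B]
    [MetricSpace C] [CompleteSpace C] [SeparableSpace C] [MeasurableSpace C] [BorelSpace C]
    [MetricSpace Y] [CompleteSpace Y] [SeparableSpace Y] [MeasurableSpace Y] [BorelSpace Y]
    (ν : Measure Y)
    (η : A → Y → ℝ) (hηnn : ∀ a y, 0 ≤ η a y)
    (hC1 : CondC1 η ν)
    (hnorm : ∀ a, (∫⁻ y, ENNReal.ofReal (η a y) ∂ν) = 1)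
    (g : A → B → C → ℝ)
    (hgbdd : ∃ M : ℝ, ∀ a b c, |g a b c| ≤ M)
    (hguc : UniformContinuous (fun p : A × B × C => g p.1 p.2.1 p.2.2))
    (f : Kernel Y B → A × C → ℝ)
    (hf : ∀ (κ : Kernel Y B), IsMarkovKernel κ → ∀ a c,
      f κ (a, c) = ∫ y, (∫ b, g a b c ∂(κ y)) * η a y ∂ν) :
    (∀ M : ℝ, (∀ a b c, |g a b c| ≤ M) →
      ∀ (κ : Kernel Y B), IsMarkovKernel κ → ∀ z : A × C, |f κ z| ≤ M) ∧
    (∀ ε : ℝ, 0 < ε → ∃ δ : ℝ, 0 < δ ∧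
      ∀ (κ : Kernel Y B), IsMarkovKernel κ →
        ∀ z z' : A × C, dist z z' < δ → |f κ z - f κ z'| < ε) := by
  classical
  obtain ⟨hηcont, h, hhnn, hhmeas, ⟨Cb, hCb⟩, ⟨Mh, hMhne, hMhle⟩, hvar⟩ := hC1
  have hgcont : Continuous fun p : A × B × C => g p.1 p.2.1 p.2.2 := hguc.continuous
  have hηmeas : ∀ a, Measurable (η a) := fun a =>
    (hηcont.comp (Continuous.prodMk_right a)).measurable
  have hηint : ∀ a, Integrable (η a) ν := by
    intro a
    refine ⟨(hηmeas a).aestronglyMeasurable, ?_⟩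
    rw [hasFiniteIntegral_iff_ofReal (ae_of_all _ (hηnn a)), hnorm a]
    exact ENNReal.one_lt_top
  have hηone : ∀ a, ∫ y, η a y ∂ν = 1 := by
    intro a
    rw [integral_eq_lintegral_of_nonneg_ae (ae_of_all _ (hηnn a))
      (hηmeas a).aestronglyMeasurable, hnorm a, ENNReal.toReal_one]
  have hhmeas' : ∀ a, Measurable (h a) := fun a =>
    hhmeas.comp (measurable_prodMk_left)
  have hhint : ∀ a, Integrable (h a) ν := by
    intro a
    refine ⟨(hhmeas' a).aestronglyMeasurable, ?_⟩
    rw [hasFiniteIntegral_iff_ofReal (ae_of_all _ (hhnn a))]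
    exact lt_of_le_of_lt (hMhle a) (lt_top_iff_ne_top.mpr hMhne)
  have hhle : ∀ a, ∫ y, h a y ∂ν ≤ Mh.toReal := by
    intro a
    rw [integral_eq_lintegral_of_nonneg_ae (ae_of_all _ (hhnn a))
      (hhmeas' a).aestronglyMeasurable]
    exact ENNReal.toReal_mono hMhne (hMhle a)
  -- inner integral facts
  have hgbc : ∀ a c, Continuous fun b => g a b c := by
    intro a c
    exact hgcont.comp (Continuous.prodMk_right a |>.comp (continuous_id.prodMk continuous_const))
  have hinner_sm : ∀ (κ : Kernel Y B) (_ : IsMarkovKernel κ) (a : A) (c : C),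
      StronglyMeasurable fun y => ∫ b, g a b c ∂(κ y) := by
    intro κ hκ a c
    haveI := hκ
    have hsm : StronglyMeasurable fun p : Y × B => g a p.2 c :=
      ((hgbc a c).comp continuous_snd).stronglyMeasurable
    exact hsm.integral_kernel_prod_right'
  have hinner_bd : ∀ (κ : Kernel Y B) (_ : IsMarkovKernel κ) (a : A) (c : C) (M : ℝ),
      (∀ a b c, |g a b c| ≤ M) → ∀ y, |∫ b, g a b c ∂(κ y)| ≤ M := by
    intro κ hκ a c M hM y
    haveI := hκ
    have := norm_integral_le_of_norm_le_const (μ := κ y) (f := fun b => g a b c) (C := M)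
      (ae_of_all _ fun b => by simpa [Real.norm_eq_abs] using hM a b c)
    simpa [Real.norm_eq_abs, measure_univ] using this
  have hinner_int : ∀ (κ : Kernel Y B) (_ : IsMarkovKernel κ) (a : A) (c : C) (y : Y),
      Integrable (fun b => g a b c) (κ y) := by
    intro κ hκ a c y
    haveI := hκ
    obtain ⟨M0, hM0⟩ := hgbdd
    exact Integrable.mono' (integrable_const M0) ((hgbc a c).aestronglyMeasurable)
      (ae_of_all _ fun b => by simpa [Real.norm_eq_abs] using hM0 a b c)
  -- the integrand and its integrability
  have hGsm : ∀ (κ : Kernel Y B) (_ : IsMarkovKernel κ) (a : A) (c : C),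
      AEStronglyMeasurable (fun y => (∫ b, g a b c ∂(κ y)) * η a y) ν := by
    intro κ hκ a c
    exact ((hinner_sm κ hκ a c).mul (hηmeas a).stronglyMeasurable).aestronglyMeasurable
  have hGint : ∀ (κ : Kernel Y B) (_ : IsMarkovKernel κ) (a : A) (c : C) (M : ℝ),
      (∀ a b c, |g a b c| ≤ M) →
      Integrable (fun y => (∫ b, g a b c ∂(κ y)) * η a y) ν := by
    intro κ hκ a c M hM
    refine Integrable.mono' ((hηint a).const_mul M) (hGsm κ hκ a c) (ae_of_all _ fun y => ?_)
    rw [norm_mul, Real.norm_eq_abs, Real.norm_eq_abs, abs_of_nonneg (hηnn a y)]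
    exact mul_le_mul_of_nonneg_right (hinner_bd κ hκ a c M hM y) (hηnn a y)
  have hGint' : ∀ (κ : Kernel Y B) (_ : IsMarkovKernel κ) (a : A) (c : C),
      Integrable (fun y => (∫ b, g a b c ∂(κ y)) * η a y) ν := by
    intro κ hκ a c
    obtain ⟨M0, hM0⟩ := hgbdd
    exact hGint κ hκ a c M0 hM0
  constructor
  · -- uniform boundedness
    rintro M hM κ hκ ⟨a, c⟩
    rw [hf κ hκ a c]
    calc |∫ y, (∫ b, g a b c ∂(κ y)) * η a y ∂ν|
        ≤ ∫ y, |(∫ b, g a b c ∂(κ y)) * η a y| ∂ν := by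
          simpa only [Real.norm_eq_abs] using
            norm_integral_le_integral_norm (fun y => (∫ b, g a b c ∂(κ y)) * η a y) (μ := ν)
      _ ≤ ∫ y, M * η a y ∂ν := by
          refine integral_mono (hGint κ hκ a c M hM).abs ((hηint a).const_mul M) fun y => ?_
          rw [abs_mul, abs_of_nonneg (hηnn a y)]
          exact mul_le_mul_of_nonneg_right (hinner_bd κ hκ a c M hM y) (hηnn a y)
      _ = M := by rw [integral_const_mul, hηone a, mul_one]
  · -- uniform equicontinuity
    intro ε hε
    obtain ⟨M0, hM0⟩ := hgbdd
    set Mg : ℝ := max M0 0 with hMg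
    have hMgnn : 0 ≤ Mg := le_max_right _ _
    have hMg' : ∀ a b c, |g a b c| ≤ Mg := fun a b c => le_trans (hM0 a b c) (le_max_left _ _)
    set Mh' : ℝ := Mh.toReal with hMh'
    have hMh'nn : 0 ≤ Mh' := ENNReal.toReal_nonneg
    set ε₂ : ℝ := ε / (2 * (Mg + 1) * (Mh' + 1)) with hε₂def
    have hden : 0 < 2 * (Mg + 1) * (Mh' + 1) := by positivity
    have hε₂pos : 0 < ε₂ := div_pos hε hden
    obtain ⟨δ₂, hδ₂pos, hδ₂⟩ := hvar ε₂ hε₂pos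
    obtain ⟨δ₁, hδ₁pos, hδ₁⟩ := Metric.uniformContinuous_iff.mp hguc (ε / 2) (half_pos hε)
    refine ⟨min δ₁ δ₂, lt_min hδ₁pos hδ₂pos, ?_⟩
    rintro κ hκ ⟨a, c⟩ ⟨a', c'⟩ hdist
    haveI := hκ
    have hdaa : dist a a' ≤ dist ((a, c) : A × C) (a', c') := by
      rw [Prod.dist_eq]; exact le_max_left _ _
    have hdcc : dist c c' ≤ dist ((a, c) : A × C) (a', c') := by
      rw [Prod.dist_eq]; exact le_max_right _ _
    have hda1 : dist a a' < δ₁ := lt_of_le_of_lt hdaa (lt_of_lt_of_le hdist (min_le_left _ _))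
    have hda2 : dist a a' < δ₂ := lt_of_le_of_lt hdaa (lt_of_lt_of_le hdist (min_le_right _ _))
    have hdc1 : dist c c' < δ₁ := lt_of_le_of_lt hdcc (lt_of_lt_of_le hdist (min_le_left _ _))
    -- closeness of g
    have hgclose : ∀ b : B, |g a b c - g a' b c'| < ε / 2 := by
      intro b
      have hd : dist ((a, b, c) : A × B × C) (a', b, c') < δ₁ := by
        rw [Prod.dist_eq, Prod.dist_eq, dist_self]
        exact max_lt hda1 (max_lt hδ₁pos hdc1)
      simpa [Real.dist_eq] using hδ₁ hd
    -- closeness of η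
    have hηclose : ∀ y, |η a y - η a' y| < ε₂ * h a' y := fun y => hδ₂ a' a hda2 y
    -- pointwise bound on the difference of integrands
    have hpt : ∀ y, |(∫ b, g a b c ∂(κ y)) * η a y - (∫ b, g a' b c' ∂(κ y)) * η a' y|
        ≤ (ε / 2) * η a y + Mg * (ε₂ * h a' y) := by
      intro y
      have hid : (∫ b, g a b c ∂(κ y)) * η a y - (∫ b, g a' b c' ∂(κ y)) * η a' y
          = ((∫ b, g a b c ∂(κ y)) - (∫ b, g a' b c' ∂(κ y))) * η a y
            + (∫ b, g a' b c' ∂(κ y)) * (η a y - η a' y) := by ring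
      rw [hid]
      refine le_trans (abs_add_le _ _) (add_le_add ?_ ?_)
      · rw [abs_mul, abs_of_nonneg (hηnn a y)]
        refine mul_le_mul_of_nonneg_right ?_ (hηnn a y)
        rw [← integral_sub (hinner_int κ hκ a c y) (hinner_int κ hκ a' c' y)]
        have := norm_integral_le_of_norm_le_const (μ := κ y)
          (f := fun b => g a b c - g a' b c') (C := ε / 2)
          (ae_of_all _ fun b => by
            simpa [Real.norm_eq_abs] using le_of_lt (hgclose b))
        simpa [Real.norm_eq_abs, measure_univ] using this
      · rw [abs_mul]
        have h1 : |∫ b, g a' b c' ∂(κ y)| ≤ Mg := hinner_bd κ hκ a' c' Mg hMg' y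
        have h2 : |η a y - η a' y| ≤ ε₂ * h a' y := le_of_lt (hηclose y)
        exact mul_le_mul h1 h2 (abs_nonneg _) hMgnn
    -- put things together
    rw [hf κ hκ a c, hf κ hκ a' c',
      ← integral_sub (hGint' κ hκ a c) (hGint' κ hκ a' c')]
    have hbint : Integrable (fun y => (ε / 2) * η a y + Mg * (ε₂ * h a y)) ν := by
      exact ((hηint a).const_mul _).add (((hhint a).const_mul _).const_mul _)
    calc |∫ y, ((∫ b, g a b c ∂(κ y)) * η a y - (∫ b, g a' b c' ∂(κ y)) * η a' y) ∂ν|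
        ≤ ∫ y, |(∫ b, g a b c ∂(κ y)) * η a y - (∫ b, g a' b c' ∂(κ y)) * η a' y| ∂ν := by
          simpa only [Real.norm_eq_abs] using norm_integral_le_integral_norm
            (fun y => (∫ b, g a b c ∂(κ y)) * η a y - (∫ b, g a' b c' ∂(κ y)) * η a' y) (μ := ν)
      _ ≤ ∫ y, ((ε / 2) * η a y + Mg * (ε₂ * h a' y)) ∂ν := by
          refine integral_mono ((hGint' κ hκ a c).sub (hGint' κ hκ a' c')).abs
            (((hηint a).const_mul _).add (((hhint a').const_mul _).const_mul _)) hpt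
      _ = (ε / 2) * ∫ y, η a y ∂ν + Mg * (ε₂ * ∫ y, h a' y ∂ν) := by
          rw [integral_add ((hηint a).const_mul _) (((hhint a').const_mul _).const_mul _),
            integral_const_mul, integral_const_mul, integral_const_mul]
      _ ≤ ε / 2 + Mg * (ε₂ * Mh') := by
          rw [hηone a, mul_one]
          refine add_le_add le_rfl (mul_le_mul_of_nonneg_left
            (mul_le_mul_of_nonneg_left (hhle a') (le_of_lt hε₂pos)) hMgnn)
      _ < ε := by
          have hε₂eq : ε₂ * (2 * (Mg + 1) * (Mh' + 1)) = ε := div_mul_cancel₀ ε (ne_of_gt hden)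
          nlinarith [hε₂pos, hMgnn, hMh'nn]
end
end

section
/- Let A, B, C, Y be Polish spaces, let ν be a nonnegative countably additive Borel measure on Y, and let η : A × Y → [0,∞) be a function such that the pair (η, ν) satisfies Condition C1 and ∫_Y η(a,y) ν(dy) = 1 for every a ∈ A. Let g : A × B × C → ℝ be bounded and uniformly continuous. Then for every Markov kernel κ from Y to B, the function f_κ : A × C → ℝ defined by f_κ(a,c) = ∫_Y (∫_B g(a,b,c) κ(y)(db)) η(a,y) ν(dy) is bounded and uniformly continuous on A × C. -/
open MeasureTheory ProbabilityTheory Filter Topology TopologicalSpace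
open scoped ENNReal NNReal

noncomputable section

/-!
Write `G (a, c) y = ∫ g(a,b,c) κ(y)(db)`, so that `f_κ(z) = ∫ G z y η(a,y) ν(dy)`, and split
`f_κ(z) - f_κ(z') = ∫ (G z - G z') η(a,·) dν + ∫ G z' (η(a,·) - η(a',·)) dν`.
Since `κ(y)` and `η(a,·) ν` are probability measures, the first term is bounded by
`sup_{b,y} |g(a,b,c) - g(a',b,c')|`, small by uniform continuity of `g`; the second is bounded by
`sup |g| · ∫ |η(a,·) - η(a',·)| dν`, and Condition C1 bounds that `L¹` distance by
`ε ∫ h(a',·) dν ≤ ε · sup_a ∫ h(a,·) dν`.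
-/

open scoped Uniformity

theorem UniformContinuous.uniformEquicontinuous_swap {X B α : Type*} [PseudoMetricSpace X]
    [PseudoMetricSpace B] [PseudoMetricSpace α] {F : X × B → α} (hF : UniformContinuous F) :
    UniformEquicontinuous fun b x => F (x, b) := by
  refine Metric.uniformEquicontinuous_iff.mpr fun ε hε => ?_
  obtain ⟨δ, hδ, hFδ⟩ := Metric.uniformContinuous_iff.mp hF ε hε
  exact ⟨δ, hδ, fun x x' hxx' b => hFδ (by simpa [Prod.dist_eq] using hxx')⟩

section

variable {Y : Type*} [MeasurableSpace Y] {ν : Measure Y}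

theorem abs_integral_le_of_forall_abs_le [IsProbabilityMeasure ν] {F : Y → ℝ} {M : ℝ}
    (hFM : ∀ y, |F y| ≤ M) : |∫ y, F y ∂ν| ≤ M := by
  simpa using norm_integral_le_of_norm_le_const (μ := ν) (f := F) (ae_of_all _ hFM)

theorem abs_integral_mul_le_mul_integral_abs {F ρ : Y → ℝ} {M : ℝ} (hFM : ∀ y, |F y| ≤ M)
    (hρ : Integrable ρ ν) : |∫ y, F y * ρ y ∂ν| ≤ M * ∫ y, |ρ y| ∂ν := by
  rw [← integral_const_mul M, ← Real.norm_eq_abs]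
  refine norm_integral_le_of_norm_le (hρ.abs.const_mul M) (ae_of_all _ fun y => ?_)
  rw [norm_mul, Real.norm_eq_abs, Real.norm_eq_abs]
  exact mul_le_mul_of_nonneg_right (hFM y) (abs_nonneg _)

theorem abs_integral_mul_density_le {F ρ : Y → ℝ} {M : ℝ} (hFM : ∀ y, |F y| ≤ M)
    (hρ0 : ∀ y, 0 ≤ ρ y) (hρint : Integrable ρ ν) (hρ1 : ∫ y, ρ y ∂ν = 1) :
    |∫ y, F y * ρ y ∂ν| ≤ M := by
  simpa only [abs_of_nonneg (hρ0 _), hρ1, mul_one] using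
    abs_integral_mul_le_mul_integral_abs hFM hρint

theorem uniformContinuous_integral_mul_density {Z : Type*} [UniformSpace Z] {G ρ : Z → Y → ℝ}
    {M : ℝ} (hGm : ∀ z, AEStronglyMeasurable (G z) ν) (hGM : ∀ z y, |G z y| ≤ M)
    (hG : UniformEquicontinuous fun y z => G z y)
    (hρ0 : ∀ z y, 0 ≤ ρ z y) (hρint : ∀ z, Integrable (ρ z) ν) (hρ1 : ∀ z, ∫ y, ρ z y ∂ν = 1)
    (hρ : Tendsto (fun p : Z × Z => ∫ y, |ρ p.1 y - ρ p.2 y| ∂ν) (𝓤 Z) (𝓝 0)) :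
    UniformContinuous fun z => ∫ y, G z y * ρ z y ∂ν := by
  refine Metric.uniformity_basis_dist.tendsto_right_iff.mpr fun ε hε => ?_
  have hρclose : ∀ᶠ p : Z × Z in 𝓤 Z, M * ∫ y, |ρ p.1 y - ρ p.2 y| ∂ν < ε / 2 :=
    (hρ.const_mul M).eventually (gt_mem_nhds (by simpa using half_pos hε))
  filter_upwards [Metric.uniformEquicontinuous_iff_right.mp hG (ε / 2) (half_pos hε), hρclose]
    with ⟨z, z'⟩ hGzz' hρzz'
  have hint : ∀ w w', Integrable (fun y => G w y * ρ w' y) ν := fun w w' =>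
    (hρint w').bdd_mul (hGm w) (ae_of_all _ (hGM w))
  have hsplit : (∫ y, G z y * ρ z y ∂ν) - ∫ y, G z' y * ρ z' y ∂ν
      = (∫ y, (G z y - G z' y) * ρ z y ∂ν) + ∫ y, G z' y * (ρ z y - ρ z' y) ∂ν := by
    rw [← integral_sub (hint z z) (hint z' z'), ← integral_add]
    · congr 1 with y; ring
    · exact ((hint z z).sub (hint z' z)).congr (ae_of_all _ fun y => (sub_mul ..).symm)
    · exact ((hint z' z).sub (hint z' z')).congr (ae_of_all _ fun y => (mul_sub ..).symm)
  have hfirst : |∫ y, (G z y - G z' y) * ρ z y ∂ν| ≤ ε / 2 :=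
    abs_integral_mul_density_le (fun y => (hGzz' y).le) (hρ0 z) (hρint z) (hρ1 z)
  have hsecond : |∫ y, G z' y * (ρ z y - ρ z' y) ∂ν| < ε / 2 :=
    (abs_integral_mul_le_mul_integral_abs (hGM z') ((hρint z).sub (hρint z'))).trans_lt hρzz'
  calc dist (∫ y, G z y * ρ z y ∂ν) (∫ y, G z' y * ρ z' y ∂ν)
      = |(∫ y, (G z y - G z' y) * ρ z y ∂ν) + ∫ y, G z' y * (ρ z y - ρ z' y) ∂ν| := by
        rw [Real.dist_eq, hsplit]
    _ ≤ |∫ y, (G z y - G z' y) * ρ z y ∂ν| + |∫ y, G z' y * (ρ z y - ρ z' y) ∂ν| :=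
        abs_add_le _ _
    _ < ε := by linarith

theorem integrable_of_lintegral_ofReal_eq_one {ρ : Y → ℝ} (hρ0 : ∀ y, 0 ≤ ρ y)
    (hρm : AEStronglyMeasurable ρ ν) (hρ1 : ∫⁻ y, ENNReal.ofReal (ρ y) ∂ν = 1) :
    Integrable ρ ν :=
  ⟨hρm, (hasFiniteIntegral_iff_ofReal (ae_of_all _ hρ0)).mpr (hρ1 ▸ ENNReal.one_lt_top)⟩

theorem integral_eq_one_of_lintegral_ofReal_eq_one {ρ : Y → ℝ} (hρ0 : ∀ y, 0 ≤ ρ y)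
    (hρm : AEStronglyMeasurable ρ ν) (hρ1 : ∫⁻ y, ENNReal.ofReal (ρ y) ∂ν = 1) :
    ∫ y, ρ y ∂ν = 1 := by
  rw [integral_eq_lintegral_of_nonneg_ae (ae_of_all _ hρ0) hρm, hρ1, ENNReal.toReal_one]

end

theorem UniformEquicontinuous.integral {ι X B : Type*} [UniformSpace X] [MeasurableSpace B]
    {μ : ι → Measure B} [∀ i, IsProbabilityMeasure (μ i)] {g : X → B → ℝ}
    (hg : UniformEquicontinuous fun b x => g x b) (hint : ∀ i x, Integrable (g x) (μ i)) :
    UniformEquicontinuous fun i x => ∫ b, g x b ∂μ i := by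
  refine Metric.uniformEquicontinuous_iff_right.mpr fun ε hε => ?_
  filter_upwards [Metric.uniformEquicontinuous_iff_right.mp hg (ε / 2) (half_pos hε)]
    with ⟨x, x'⟩ hxx' i
  rw [Real.dist_eq, ← integral_sub (hint i x) (hint i x')]
  exact (abs_integral_le_of_forall_abs_le fun b => (hxx' b).le).trans_lt (half_lt_self hε)

theorem CondC1.tendsto_integral_abs_sub {A Y : Type*} [PseudoMetricSpace A] [MeasurableSpace A]
    [TopologicalSpace Y] [MeasurableSpace Y] {η : A → Y → ℝ} {ν : Measure Y}
    (hC1 : CondC1 η ν) :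
    Tendsto (fun p : A × A => ∫ y, |η p.1 y - η p.2 y| ∂ν) (𝓤 A) (𝓝 0) := by
  obtain ⟨-, h, hh0, hhm, -, ⟨K, hKtop, hK⟩, hvar⟩ := hC1
  have hhm' : ∀ a, AEStronglyMeasurable (h a) ν := fun a =>
    (hhm.comp (measurable_const.prodMk measurable_id)).aestronglyMeasurable
  have hhint : ∀ a, Integrable (h a) ν := fun a =>
    ⟨hhm' a, (hasFiniteIntegral_iff_ofReal (ae_of_all _ (hh0 a))).mpr
      ((hK a).trans_lt hKtop.lt_top)⟩
  have hhle : ∀ a, ∫ y, h a y ∂ν ≤ K.toReal := fun a => by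
    rw [integral_eq_lintegral_of_nonneg_ae (ae_of_all _ (hh0 a)) (hhm' a)]
    exact ENNReal.toReal_mono hKtop (hK a)
  refine Metric.tendsto_nhds.mpr fun ε hε => ?_
  obtain ⟨δ, hδ, hηδ⟩ := hvar (ε / (K.toReal + 1)) (by positivity)
  filter_upwards [Metric.dist_mem_uniformity hδ] with ⟨a, a₀⟩ haa₀
  rw [Real.dist_0_eq_abs, abs_of_nonneg (integral_nonneg fun _ => abs_nonneg _)]
  calc ∫ y, |η a y - η a₀ y| ∂ν ≤ ∫ y, ε / (K.toReal + 1) * h a₀ y ∂ν :=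
        integral_mono_of_nonneg (ae_of_all _ fun _ => abs_nonneg _) ((hhint a₀).const_mul _)
          (ae_of_all _ fun y => (hηδ a₀ a haa₀ y).le)
    _ = ε / (K.toReal + 1) * ∫ y, h a₀ y ∂ν := integral_const_mul _ _
    _ ≤ ε / (K.toReal + 1) * K.toReal := by gcongr; exact hhle a₀
    _ < ε := by
        rw [div_mul_eq_mul_div, div_lt_iff₀ (by positivity)]
        nlinarith [ENNReal.toReal_nonneg (a := K)]

theorem stmt_1_general
    {A B C Y : Type*}
    [MetricSpace A] [MeasurableSpace A]
    [MetricSpace B] [MeasurableSpace B] [BorelSpace B]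
    [MetricSpace C]
    [MetricSpace Y] [MeasurableSpace Y] [BorelSpace Y]
    (ν : Measure Y)
    (η : A → Y → ℝ) (hηnn : ∀ a y, 0 ≤ η a y)
    (hC1 : CondC1 η ν)
    (hnorm : ∀ a, (∫⁻ y, ENNReal.ofReal (η a y) ∂ν) = 1)
    (g : A → B → C → ℝ)
    (hgbdd : ∃ M : ℝ, ∀ a b c, |g a b c| ≤ M)
    (hguc : UniformContinuous (fun p : A × B × C => g p.1 p.2.1 p.2.2))
    (κ : Kernel Y B) (hκ : IsMarkovKernel κ) :
    (∃ M : ℝ, ∀ z : A × C, |∫ y, (∫ b, g z.1 b z.2 ∂(κ y)) * η z.1 y ∂ν| ≤ M) ∧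
    UniformContinuous (fun z : A × C => ∫ y, (∫ b, g z.1 b z.2 ∂(κ y)) * η z.1 y ∂ν) := by
  obtain ⟨M, hM⟩ := hgbdd
  have hgcont : ∀ z : A × C, Continuous fun b => g z.1 b z.2 := fun z =>
    hguc.continuous.comp (f := fun b => (z.1, b, z.2)) (by fun_prop)
  have hgint : ∀ y (z : A × C), Integrable (fun b => g z.1 b z.2) (κ y) := fun y z =>
    .of_bound (hgcont z).aestronglyMeasurable M (ae_of_all _ fun b => hM _ _ _)
  have hGm : ∀ z : A × C, StronglyMeasurable fun y => ∫ b, g z.1 b z.2 ∂κ y := fun z =>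
    ((hgcont z).stronglyMeasurable.comp_measurable measurable_snd).integral_kernel_prod_right'
  have hGM : ∀ (z : A × C) y, |∫ b, g z.1 b z.2 ∂κ y| ≤ M := fun z y =>
    abs_integral_le_of_forall_abs_le fun b => hM z.1 b z.2
  have hGuc : UniformEquicontinuous fun y (z : A × C) => ∫ b, g z.1 b z.2 ∂κ y :=
    UniformEquicontinuous.integral (g := fun (z : A × C) b => g z.1 b z.2)
      (hguc.comp (f := fun p : (A × C) × B => (p.1.1, p.2, p.1.2))
        (by fun_prop)).uniformEquicontinuous_swap hgint
  have hηm : ∀ a, AEStronglyMeasurable (η a) ν := fun a =>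
    (hC1.1.uncurry_left a).aestronglyMeasurable
  have hηint : ∀ a, Integrable (η a) ν := fun a =>
    integrable_of_lintegral_ofReal_eq_one (hηnn a) (hηm a) (hnorm a)
  have hη1 : ∀ a, ∫ y, η a y ∂ν = 1 := fun a =>
    integral_eq_one_of_lintegral_ofReal_eq_one (hηnn a) (hηm a) (hnorm a)
  exact ⟨⟨M, fun z => abs_integral_mul_density_le (hGM z) (hηnn z.1) (hηint z.1) (hη1 z.1)⟩,
    uniformContinuous_integral_mul_density (fun z => (hGm z).aestronglyMeasurable) hGM hGuc
      (fun z => hηnn z.1) (fun z => hηint z.1) (fun z => hη1 z.1)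
      (hC1.tendsto_integral_abs_sub.comp uniformContinuous_fst)⟩

/-- For every Markov kernel `κ` from `Y` to `B`, the function
`f_κ(a,c) = ∫ (∫ g(a,b,c) κ(y)(db)) η(a,y) ν(dy)` is bounded and uniformly continuous. -/
theorem stmt_1
    {A B C Y : Type*}
    [MetricSpace A] [CompleteSpace A] [SeparableSpace A] [MeasurableSpace A] [BorelSpace A]
    [MetricSpace B] [CompleteSpace B] [SeparableSpace B] [MeasurableSpace B] [BorelSpace B]
    [MetricSpace C] [CompleteSpace C] [SeparableSpace C] [MeasurableSpace C] [BorelSpace C]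
    [MetricSpace Y] [CompleteSpace Y] [SeparableSpace Y] [MeasurableSpace Y] [BorelSpace Y]
    (ν : Measure Y)
    (η : A → Y → ℝ) (hηnn : ∀ a y, 0 ≤ η a y)
    (hC1 : CondC1 η ν)
    (hnorm : ∀ a, (∫⁻ y, ENNReal.ofReal (η a y) ∂ν) = 1)
    (g : A → B → C → ℝ)
    (hgbdd : ∃ M : ℝ, ∀ a b c, |g a b c| ≤ M)
    (hguc : UniformContinuous (fun p : A × B × C => g p.1 p.2.1 p.2.2))
    (κ : Kernel Y B) (hκ : IsMarkovKernel κ) :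
    (∃ M : ℝ, ∀ z : A × C, |∫ y, (∫ b, g z.1 b z.2 ∂(κ y)) * η z.1 y ∂ν| ≤ M) ∧
    UniformContinuous (fun z : A × C => ∫ y, (∫ b, g z.1 b z.2 ∂(κ y)) * η z.1 y ∂ν) :=
  stmt_1_general ν η hηnn hC1 hnorm g hgbdd hguc κ hκ
end
end

section
/- Let N ∈ ℕ, let A, C, and B¹,…,Bᴺ, Y¹,…,Yᴺ be Polish spaces, for each i let νⁱ be a nonnegative countably additive Borel measure on Yⁱ and ηⁱ : A × Yⁱ → [0,∞) a function such that the pair (ηⁱ, νⁱ) satisfies Condition C1 and ∫ ηⁱ(a,y) νⁱ(dy) = 1 for every a ∈ A. Let g : A × B¹ × ⋯ × Bᴺ × C → ℝ be bounded and uniformly continuous. For each N-tuple of Markov kernels κⁱ from Yⁱ to Bⁱ define f_{κ¹,…,κᴺ}(a,c) = ∫ g(a, b¹,…,bᴺ, c) ∏_{i=1}^N κⁱ(yⁱ)(dbⁱ) ηⁱ(a,yⁱ) νⁱ(dyⁱ). Then the family {f_{κ¹,…,κᴺ}} over all N-tuples of Markov kernels is uniformly bounded by sup|g| and uniformly equicontinuous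 on A × C. -/
/-!
The inner integral `∫ g(a, b, c) d(⊗ᵢ κⁱ(yⁱ))(b)` is bounded by `sup |g|` and, by uniform
continuity of `g`, moves by less than `ε / 2` when `(a, c)` moves by less than `δ`, whatever
the kernels. The outer weight `w_a(y) = ∏ᵢ ηⁱ(a, yⁱ)` has mass at most `1` and, by Condition C1
and a telescoping estimate for products, `a ↦ w_a` is uniformly continuous into `L¹(⊗ᵢ νⁱ)`.
The `νⁱ` need not be σ-finite, so the integral of a product density is bounded by restricting
each `νⁱ` to the support of its factor, where it is σ-finite because that factor is integrable.
-/

open MeasureTheory ProbabilityTheory Filter Topology TopologicalSpace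
open scoped ENNReal NNReal

noncomputable section

open Set

theorem sigmaFinite_restrict_support_of_lintegral_ne_top {E : Type*} [MeasurableSpace E]
    {μ : Measure E} {f : E → ℝ≥0∞} (hf : Measurable f) (hfin : ∫⁻ x, f x ∂μ ≠ ∞) :
    SigmaFinite (μ.restrict (Function.support f)) := by
  obtain ⟨t, ht, hft, _⟩ :=
    (ENNReal.aefinStronglyMeasurable_of_aemeasurable hfin hf.aemeasurable).exists_set_sigmaFinite
  have hsupp : Function.support f =ᵐ[μ] (Function.support f ∩ t : Set E) := by
    filter_upwards [(ae_restrict_iff' ht.compl).1 hft] with x hx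
    change (x ∈ Function.support f) = (x ∈ Function.support f ∩ t)
    by_cases hxt : x ∈ t <;> simp_all
  rw [Measure.restrict_congr_set hsupp, ← Measure.restrict_restrict (measurableSet_support hf)]
  infer_instance

theorem lintegral_fin_nat_prod_eq_prod {n : ℕ} {E : Fin n → Type*} [∀ i, MeasurableSpace (E i)]
    {μ : ∀ i, Measure (E i)} [∀ i, SigmaFinite (μ i)] {f : ∀ i, E i → ℝ≥0∞}
    (hf : ∀ i, Measurable (f i)) :
    ∫⁻ x, ∏ i, f i (x i) ∂Measure.pi μ = ∏ i, ∫⁻ x, f i x ∂μ i := by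
  induction n with
  | zero => simp
  | succ n ih =>
    calc ∫⁻ x, ∏ i, f i (x i) ∂Measure.pi μ
        = ∫⁻ x : E 0 × (∀ j : Fin n, E (Fin.succAbove 0 j)),
            f 0 x.1 * ∏ j, f (Fin.succAbove 0 j) (x.2 j)
            ∂(μ 0).prod (Measure.pi fun j => μ (Fin.succAbove 0 j)) := by
          rw [← ((measurePreserving_piFinSuccAbove μ 0).symm).lintegral_comp_emb
            (MeasurableEquiv.measurableEmbedding _)]
          refine lintegral_congr fun x => ?_
          rw [Fin.prod_univ_succAbove _ 0]
          change f 0 (Fin.insertNth 0 x.1 x.2 0) * ∏ j, f _ (Fin.insertNth 0 x.1 x.2 _) = _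
          simp only [Fin.insertNth_apply_same, Fin.insertNth_apply_succAbove]
      _ = ∏ i, ∫⁻ x, f i x ∂μ i := by
          have hm : Measurable fun z : ∀ j : Fin n, E (Fin.succAbove 0 j) =>
              ∏ j, f (Fin.succAbove 0 j) (z j) := by fun_prop
          rw [lintegral_prod_mul (hf 0).aemeasurable hm.aemeasurable, ih fun j => hf _,
            Fin.prod_univ_succAbove _ 0]

theorem abs_prod_sub_prod_le {ι : Type*} [DecidableEq ι] (s : Finset ι) {u v : ι → ℝ}
    (hu : ∀ i, 0 ≤ u i) (hv : ∀ i, 0 ≤ v i) :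
    |∏ i ∈ s, u i - ∏ i ∈ s, v i| ≤ ∑ i ∈ s, |u i - v i| * ∏ j ∈ s.erase i, (u j + v j) := by
  induction s using Finset.induction_on with
  | empty => simp
  | insert a s ha ih =>
    have herase : ∀ i ∈ s, ∏ j ∈ (insert a s).erase i, (u j + v j) =
        (u a + v a) * ∏ j ∈ s.erase i, (u j + v j) := fun i hi => by
      rw [Finset.erase_insert_of_ne (ne_of_mem_of_not_mem hi ha).symm,
        Finset.prod_insert fun h => ha (Finset.mem_of_mem_erase h)]
    rw [Finset.prod_insert ha, Finset.prod_insert ha, Finset.sum_insert ha, Finset.erase_insert ha,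
      Finset.sum_congr rfl fun i hi => by rw [herase i hi, mul_left_comm], ← Finset.mul_sum]
    calc |u a * ∏ i ∈ s, u i - v a * ∏ i ∈ s, v i|
        = |(u a - v a) * ∏ i ∈ s, u i + v a * (∏ i ∈ s, u i - ∏ i ∈ s, v i)| := by ring_nf
      _ ≤ |u a - v a| * ∏ i ∈ s, (u i + v i) + (u a + v a) *
            ∑ i ∈ s, |u i - v i| * ∏ j ∈ s.erase i, (u j + v j) := by
        refine (abs_add_le _ _).trans (add_le_add ?_ ?_) <;> rw [abs_mul]
        · rw [abs_of_nonneg (Finset.prod_nonneg fun i _ => hu i)]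
          exact mul_le_mul_of_nonneg_left (Finset.prod_le_prod (fun i _ => hu i)
            fun i _ => le_add_of_nonneg_right (hv i)) (abs_nonneg _)
        · rw [abs_of_nonneg (hv a)]
          exact mul_le_mul (le_add_of_nonneg_left (hu a)) ih (abs_nonneg _)
            (add_nonneg (hu a) (hv a))

theorem ofReal_abs_prod_sub_prod_le {ι : Type*} [Fintype ι] [DecidableEq ι] {u v : ι → ℝ}
    (hu : ∀ i, 0 ≤ u i) (hv : ∀ i, 0 ≤ v i) :
    ENNReal.ofReal |∏ i, u i - ∏ i, v i| ≤
      ∑ i, ∏ k, ENNReal.ofReal (if k = i then |u k - v k| else u k + v k) := by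
  calc ENNReal.ofReal |∏ i, u i - ∏ i, v i|
      ≤ ENNReal.ofReal (∑ i, |u i - v i| * ∏ j ∈ Finset.univ.erase i, (u j + v j)) :=
        ENNReal.ofReal_le_ofReal (abs_prod_sub_prod_le _ hu hv)
    _ = ∑ i, ∏ k, ENNReal.ofReal (if k = i then |u k - v k| else u k + v k) := by
        rw [ENNReal.ofReal_sum_of_nonneg fun i _ => mul_nonneg (abs_nonneg _)
          (Finset.prod_nonneg fun j _ => add_nonneg (hu j) (hv j))]
        refine Finset.sum_congr rfl fun i _ => ?_
        rw [← Finset.mul_prod_erase _ _ (Finset.mem_univ i), if_pos rfl,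
          ENNReal.ofReal_mul (abs_nonneg _),
          ENNReal.ofReal_prod_of_nonneg fun j _ => add_nonneg (hu j) (hv j)]
        exact congrArg _ (Finset.prod_congr rfl fun j hj => by
          rw [if_neg (Finset.ne_of_mem_erase hj)])

section ProductMeasure

variable {ι : Type*} [Fintype ι] {E : ι → Type*} [∀ i, MeasurableSpace (E i)]
  {μ : ∀ i, Measure (E i)}

theorem lintegral_fintype_prod_eq_prod [∀ i, SigmaFinite (μ i)] {f : ∀ i, E i → ℝ≥0∞}
    (hf : ∀ i, Measurable (f i)) :
    ∫⁻ x, ∏ i, f i (x i) ∂Measure.pi μ = ∏ i, ∫⁻ x, f i x ∂μ i := by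
  let e := (Fintype.equivFin ι).symm
  rw [← (measurePreserving_piCongrLeft μ e).lintegral_comp_emb
    (MeasurableEquiv.measurableEmbedding _)]
  simp_rw [← e.prod_comp, MeasurableEquiv.coe_piCongrLeft, Equiv.piCongrLeft_apply_apply]
  exact lintegral_fin_nat_prod_eq_prod fun i => hf (e i)

theorem MeasureTheory.Measure.restrict_univ_pi_le_pi_restrict {s : ∀ i, Set (E i)}
    (hs : ∀ i, MeasurableSet (s i)) :
    (Measure.pi μ).restrict (univ.pi s) ≤ Measure.pi fun i => (μ i).restrict (s i) := by
  -- `OuterMeasure.pi` is the largest outer measure bounded by the product on boxes.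
  have hle : OuterMeasure.restrict (univ.pi s) (OuterMeasure.pi fun i => (μ i).toOuterMeasure) ≤
      OuterMeasure.pi fun i => ((μ i).restrict (s i)).toOuterMeasure := by
    refine OuterMeasure.le_pi.2 fun t _ => ?_
    rw [OuterMeasure.restrict_apply, ← Set.pi_inter_distrib]
    refine (OuterMeasure.pi_pi_le _ _).trans_eq (Finset.prod_congr rfl fun i _ => ?_)
    rw [Measure.toOuterMeasure_apply, Measure.toOuterMeasure_apply, Measure.restrict_apply' (hs i)]
  refine Measure.le_iff.2 fun t ht => ?_
  rw [Measure.restrict_apply ht, Measure.pi_def, Measure.pi_def,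
    toMeasure_apply _ _ (ht.inter (MeasurableSet.univ_pi hs)), toMeasure_apply _ _ ht,
    ← OuterMeasure.restrict_apply]
  exact hle t

theorem lintegral_fintype_prod_le_prod {f : ∀ i, E i → ℝ≥0∞} (hf : ∀ i, Measurable (f i))
    (hfin : ∀ i, ∫⁻ x, f i x ∂μ i ≠ ∞) :
    ∫⁻ x, ∏ i, f i (x i) ∂Measure.pi μ ≤ ∏ i, ∫⁻ x, f i x ∂μ i := by
  have := fun i => sigmaFinite_restrict_support_of_lintegral_ne_top (hf i) (hfin i)
  have hsupp : Function.support (fun x : ∀ i, E i => ∏ i, f i (x i)) ⊆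
      univ.pi fun i => Function.support (f i) := fun x hx i _ =>
    Finset.prod_ne_zero_iff.1 hx i (Finset.mem_univ i)
  calc ∫⁻ x, ∏ i, f i (x i) ∂Measure.pi μ
      = ∫⁻ x in univ.pi fun i => Function.support (f i), ∏ i, f i (x i) ∂Measure.pi μ :=
        (setLIntegral_eq_of_support_subset hsupp).symm
    _ ≤ ∫⁻ x, ∏ i, f i (x i) ∂Measure.pi fun i => (μ i).restrict (Function.support (f i)) :=
        lintegral_mono' (Measure.restrict_univ_pi_le_pi_restrict
          fun i => measurableSet_support (hf i)) le_rfl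
    _ = ∏ i, ∫⁻ x in Function.support (f i), f i x ∂μ i := lintegral_fintype_prod_eq_prod hf
    _ ≤ ∏ i, ∫⁻ x, f i x ∂μ i := Finset.prod_le_prod' fun i _ => setLIntegral_le_lintegral _ _

variable {u v : ∀ i, E i → ℝ}

theorem lintegral_ofReal_prod_le_one (hu : ∀ i x, 0 ≤ u i x) (hum : ∀ i, Measurable (u i))
    (hu1 : ∀ i, ∫⁻ x, ENNReal.ofReal (u i x) ∂μ i ≤ 1) :
    ∫⁻ x, ENNReal.ofReal (∏ i, u i (x i)) ∂Measure.pi μ ≤ 1 := by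
  simp_rw [ENNReal.ofReal_prod_of_nonneg fun i _ => hu i _]
  calc ∫⁻ x, ∏ i, ENNReal.ofReal (u i (x i)) ∂Measure.pi μ
      ≤ ∏ i, ∫⁻ x, ENNReal.ofReal (u i x) ∂μ i :=
        lintegral_fintype_prod_le_prod (fun i => (hum i).ennreal_ofReal)
          fun i => ((hu1 i).trans_lt ENNReal.one_lt_top).ne
    _ ≤ 1 := Finset.prod_le_one' fun i _ => hu1 i

theorem lintegral_abs_prod_sub_prod_le (hu : ∀ i x, 0 ≤ u i x) (hv : ∀ i x, 0 ≤ v i x)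
    (hum : ∀ i, Measurable (u i)) (hvm : ∀ i, Measurable (v i))
    (hu1 : ∀ i, ∫⁻ x, ENNReal.ofReal (u i x) ∂μ i ≤ 1)
    (hv1 : ∀ i, ∫⁻ x, ENNReal.ofReal (v i x) ∂μ i ≤ 1) :
    ∫⁻ x, ENNReal.ofReal |∏ i, u i (x i) - ∏ i, v i (x i)| ∂Measure.pi μ ≤
      2 ^ Fintype.card ι * ∑ i, ∫⁻ x, ENNReal.ofReal |u i x - v i x| ∂μ i := by
  classical
  let F : ι → ∀ k, E k → ℝ≥0∞ := fun i k x =>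
    ENNReal.ofReal (if k = i then |u k x - v k x| else u k x + v k x)
  have hFm : ∀ i k, Measurable (F i k) := fun i k => by
    by_cases hk : k = i
    · subst hk
      simpa [F] using ((hum k).sub (hvm k)).abs.ennreal_ofReal
    · simpa [F, hk] using ((hum k).add (hvm k)).ennreal_ofReal
  have hsum2 : ∀ k, ∫⁻ x, ENNReal.ofReal (u k x + v k x) ∂μ k ≤ 2 := fun k => by
    simp_rw [ENNReal.ofReal_add (hu k _) (hv k _)]
    rw [lintegral_add_left (hum k).ennreal_ofReal, ← one_add_one_eq_two]
    exact add_le_add (hu1 k) (hv1 k)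
  have hF2 : ∀ i k, ∫⁻ x, F i k x ∂μ k ≤ 2 := fun i k => by
    by_cases hk : k = i
    · subst hk
      refine le_trans (lintegral_mono fun x => ?_) (hsum2 k)
      simpa [F] using ENNReal.ofReal_le_ofReal <| abs_sub_le_of_nonneg_of_le (hu k x)
        (le_add_of_nonneg_right (hv k x)) (hv k x) (le_add_of_nonneg_left (hu k x))
    · simpa [F, hk] using hsum2 k
  calc ∫⁻ x, ENNReal.ofReal |∏ i, u i (x i) - ∏ i, v i (x i)| ∂Measure.pi μ
      ≤ ∑ i, ∫⁻ x, ∏ k, F i k (x k) ∂Measure.pi μ := by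
        rw [← lintegral_finsetSum _ fun i _ => by fun_prop]
        exact lintegral_mono fun x => ofReal_abs_prod_sub_prod_le (fun i => hu i _) fun i => hv i _
    _ ≤ ∑ i, ∏ k, ∫⁻ x, F i k x ∂μ k :=
        Finset.sum_le_sum fun i _ => lintegral_fintype_prod_le_prod (hFm i)
          fun k => ne_top_of_le_ne_top (by simp) (hF2 i k)
    _ ≤ ∑ i, 2 ^ Fintype.card ι * ∫⁻ x, ENNReal.ofReal |u i x - v i x| ∂μ i := by
        refine Finset.sum_le_sum fun i _ => ?_
        rw [← Finset.mul_prod_erase _ _ (Finset.mem_univ i), mul_comm]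
        refine mul_le_mul' ?_ (by simp [F])
        calc ∏ k ∈ Finset.univ.erase i, ∫⁻ x, F i k x ∂μ k
            ≤ 2 ^ (Finset.univ.erase i).card := Finset.prod_le_pow_card _ _ _ fun k _ => hF2 i k
          _ ≤ 2 ^ Fintype.card ι := pow_le_pow_right₀ one_le_two (Finset.card_le_univ _)
    _ = 2 ^ Fintype.card ι * ∑ i, ∫⁻ x, ENNReal.ofReal |u i x - v i x| ∂μ i :=
        (Finset.mul_sum ..).symm

end ProductMeasure

namespace ProbabilityTheory.Kernel

variable {ι : Type*} [Fintype ι] {Y B : ι → Type*} [∀ i, MeasurableSpace (Y i)]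
  [∀ i, MeasurableSpace (B i)] (κ : ∀ i, Kernel (Y i) (B i)) [∀ i, IsMarkovKernel (κ i)]

protected def pi : Kernel (∀ i, Y i) (∀ i, B i) where
  toFun y := Measure.pi fun i => κ i (y i)
  measurable' := by
    refine .measure_of_isPiSystem_of_isProbabilityMeasure generateFrom_pi.symm isPiSystem_pi ?_
    rintro _ ⟨s, hs, rfl⟩
    simp_rw [Measure.pi_pi]
    exact Finset.measurable_prod _ fun i _ =>
      ((κ i).measurable_coe (hs i (mem_univ i))).comp (measurable_pi_apply i)

instance : IsMarkovKernel (Kernel.pi κ) :=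
  ⟨fun y => (inferInstance : IsProbabilityMeasure (Measure.pi fun i => κ i (y i)))⟩

end ProbabilityTheory.Kernel

section Mixture

variable {X Z : Type*} [MeasurableSpace X] [MeasurableSpace Z] {μ : Measure X}

theorem abs_integral_le_of_abs_le {F G : X → ℝ} {γ : ℝ} (hγ : 0 ≤ γ) (hFG : ∀ x, |F x| ≤ G x)
    (hG : ∫⁻ x, ENNReal.ofReal (G x) ∂μ ≤ ENNReal.ofReal γ) : |∫ x, F x ∂μ| ≤ γ := by
  rw [← Real.norm_eq_abs]
  refine (norm_integral_le_lintegral_norm F).trans (ENNReal.toReal_le_of_le_ofReal hγ ?_)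
  exact (lintegral_mono fun x => ENNReal.ofReal_le_ofReal (hFG x)).trans hG

theorem abs_integral_le_of_abs_le_const {ρ : Measure Z} [IsProbabilityMeasure ρ] {G : Z → ℝ}
    {M : ℝ} (hG : ∀ z, |G z| ≤ M) : |∫ z, G z ∂ρ| ≤ M := by
  simpa using norm_integral_le_of_norm_le_const (μ := ρ) (f := G) (ae_of_all _ hG)

theorem abs_integral_sub_integral_le {ρ : Measure Z} [IsProbabilityMeasure ρ] {G G' : Z → ℝ}
    {M α : ℝ} (hGm : Measurable G) (hG'm : Measurable G') (hG : ∀ z, |G z| ≤ M)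
    (hG' : ∀ z, |G' z| ≤ M) (hGG' : ∀ z, |G z - G' z| ≤ α) :
    |∫ z, G z ∂ρ - ∫ z, G' z ∂ρ| ≤ α := by
  rw [← integral_sub (.of_bound hGm.aestronglyMeasurable M (ae_of_all _ hG))
    (.of_bound hG'm.aestronglyMeasurable M (ae_of_all _ hG'))]
  exact abs_integral_le_of_abs_le_const hGG'

theorem integrable_mul_of_abs_le {φ w : X → ℝ} {M : ℝ} (hφm : Measurable φ)
    (hφ : ∀ x, |φ x| ≤ M) (hwm : Measurable w) (hw : ∀ x, 0 ≤ w x)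
    (hw1 : ∫⁻ x, ENNReal.ofReal (w x) ∂μ ≤ 1) : Integrable (fun x => φ x * w x) μ :=
  Integrable.bdd_mul (c := M)
    ⟨hwm.aestronglyMeasurable,
      (hasFiniteIntegral_iff_ofReal (ae_of_all _ hw)).2 (hw1.trans_lt ENNReal.one_lt_top)⟩
    hφm.aestronglyMeasurable (ae_of_all _ hφ)

theorem abs_integral_mul_sub_integral_mul_le {φ ψ w v : X → ℝ} {α β γ : ℝ}
    (hα : 0 ≤ α) (hβ : 0 ≤ β) (hγ : 0 ≤ γ) (hφm : Measurable φ) (hψm : Measurable ψ)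
    (hwm : Measurable w) (hvm : Measurable v) (hφψ : ∀ x, |φ x - ψ x| ≤ α)
    (hψ : ∀ x, |ψ x| ≤ β) (hw : ∀ x, 0 ≤ w x) (hv : ∀ x, 0 ≤ v x)
    (hw1 : ∫⁻ x, ENNReal.ofReal (w x) ∂μ ≤ 1) (hv1 : ∫⁻ x, ENNReal.ofReal (v x) ∂μ ≤ 1)
    (hwv : ∫⁻ x, ENNReal.ofReal |w x - v x| ∂μ ≤ ENNReal.ofReal γ) :
    |∫ x, φ x * w x ∂μ - ∫ x, ψ x * v x ∂μ| ≤ α + β * γ := by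
  have hφ : ∀ x, |φ x| ≤ α + β := fun x => by
    simpa using (abs_add_le (φ x - ψ x) (ψ x)).trans (add_le_add (hφψ x) (hψ x))
  rw [← integral_sub (integrable_mul_of_abs_le hφm hφ hwm hw hw1)
    (integrable_mul_of_abs_le hψm hψ hvm hv hv1)]
  refine abs_integral_le_of_abs_le (G := fun x => α * w x + β * |w x - v x|) (by positivity)
    (fun x => ?_) ?_
  · calc |φ x * w x - ψ x * v x| = |(φ x - ψ x) * w x + ψ x * (w x - v x)| := by ring_nf
      _ ≤ α * w x + β * |w x - v x| := by
        refine (abs_add_le _ _).trans (add_le_add ?_ ?_) <;> rw [abs_mul]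
        · rw [abs_of_nonneg (hw x)]
          exact mul_le_mul_of_nonneg_right (hφψ x) (hw x)
        · exact mul_le_mul_of_nonneg_right (hψ x) (abs_nonneg _)
  · simp_rw [ENNReal.ofReal_add (mul_nonneg hα (hw _)) (mul_nonneg hβ (abs_nonneg _)),
      ENNReal.ofReal_mul hα, ENNReal.ofReal_mul hβ]
    rw [lintegral_add_left (hwm.ennreal_ofReal.const_mul _),
      lintegral_const_mul' _ _ ENNReal.ofReal_ne_top,
      lintegral_const_mul' _ _ ENNReal.ofReal_ne_top,
      ENNReal.ofReal_add hα (mul_nonneg hβ hγ), ENNReal.ofReal_mul hβ]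
    exact add_le_add ((mul_le_mul' le_rfl hw1).trans_eq (mul_one _)) (mul_le_mul' le_rfl hwv)

theorem abs_integral_integral_mul_le [Nonempty X] (K : Kernel X Z) [IsMarkovKernel K]
    {G : Z → ℝ} {w : X → ℝ} {M : ℝ} (hG : ∀ z, |G z| ≤ M) (hw : ∀ x, 0 ≤ w x)
    (hw1 : ∫⁻ x, ENNReal.ofReal (w x) ∂μ ≤ 1) :
    |∫ x, (∫ z, G z ∂K x) * w x ∂μ| ≤ M := by
  have hφ : ∀ x, |∫ z, G z ∂K x| ≤ M := fun x => abs_integral_le_of_abs_le_const hG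
  have hM : 0 ≤ M := (abs_nonneg _).trans (hφ (Classical.arbitrary X))
  refine abs_integral_le_of_abs_le (G := fun x => M * w x) hM (fun x => ?_) ?_
  · rw [abs_mul, abs_of_nonneg (hw x)]
    exact mul_le_mul_of_nonneg_right (hφ x) (hw x)
  · simp_rw [ENNReal.ofReal_mul hM]
    rw [lintegral_const_mul' _ _ ENNReal.ofReal_ne_top]
    exact (mul_le_mul' le_rfl hw1).trans_eq (mul_one _)

theorem uniformEquicontinuous_integral_integral_mul {P : Type*} [UniformSpace P]
    {G : P → Z → ℝ} {w : P → X → ℝ} {M : ℝ} (hGm : ∀ p, Measurable (G p))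
    (hGM : ∀ p z, |G p z| ≤ M) (hG : UniformEquicontinuous fun z p => G p z)
    (hwm : ∀ p, Measurable (w p)) (hw : ∀ p x, 0 ≤ w p x)
    (hw1 : ∀ p, ∫⁻ x, ENNReal.ofReal (w p x) ∂μ ≤ 1)
    (hwc : ∀ ε > 0, ∀ᶠ pq in uniformity P,
      ∫⁻ x, ENNReal.ofReal |w pq.1 x - w pq.2 x| ∂μ ≤ ENNReal.ofReal ε) :
    UniformEquicontinuous fun (K : {K : Kernel X Z // IsMarkovKernel K}) p =>
      ∫ x, (∫ z, G p z ∂K.1 x) * w p x ∂μ := by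
  refine Metric.uniformEquicontinuous_iff_right.2 fun ε hε => ?_
  set β := max M 0
  set γ := ε / (4 * (β + 1))
  have hβγ : β * γ ≤ ε / 4 := by
    rw [mul_div_assoc', div_le_iff₀ (by positivity)]
    nlinarith [le_max_right M 0]
  filter_upwards [Metric.uniformEquicontinuous_iff_right.1 hG (ε / 2) (half_pos hε),
    hwc γ (by positivity)] with pq hGpq hwpq
  rintro ⟨K, hK⟩
  rw [Real.dist_eq]
  calc _ ≤ ε / 2 + β * γ :=
        abs_integral_mul_sub_integral_mul_le (by positivity) (le_max_right _ _) (by positivity)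
          (hGm pq.1).stronglyMeasurable.integral_kernel.measurable
          (hGm pq.2).stronglyMeasurable.integral_kernel.measurable (hwm pq.1) (hwm pq.2)
          (fun x => abs_integral_sub_integral_le (hGm pq.1) (hGm pq.2) (hGM pq.1) (hGM pq.2)
            fun z => (hGpq z).le)
          (fun x => abs_integral_le_of_abs_le_const fun z => (hGM pq.2 z).trans (le_max_left _ _))
          (hw pq.1) (hw pq.2) (hw1 pq.1) (hw1 pq.2) hwpq
    _ < ε := by linarith

end Mixture

theorem UniformContinuous.uniformEquicontinuous_middle {A B C E : Type*} [PseudoMetricSpace A]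
    [PseudoMetricSpace B] [PseudoMetricSpace C] [PseudoMetricSpace E] {g : A → B → C → E}
    (hg : UniformContinuous fun p : A × B × C => g p.1 p.2.1 p.2.2) :
    UniformEquicontinuous fun b (p : A × C) => g p.1 b p.2 := by
  refine Metric.uniformEquicontinuous_iff.2 fun ε hε => ?_
  obtain ⟨δ, hδ, hgδ⟩ := Metric.uniformContinuous_iff.1 hg ε hε
  refine ⟨δ, hδ, fun p q hpq b => @hgδ (p.1, b, p.2) (q.1, b, q.2) (lt_of_le_of_lt ?_ hpq)⟩
  simp only [Prod.dist_eq, dist_self]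
  exact max_le_max le_rfl (max_le dist_nonneg le_rfl)

section ConditionC1

variable {A Y : Type*} [PseudoMetricSpace A] [MeasurableSpace A] [TopologicalSpace Y]
  [MeasurableSpace Y] {η : A → Y → ℝ} {ν : Measure Y}

theorem CondC1.measurable_apply [OpensMeasurableSpace Y] (hC : CondC1 η ν) (a : A) :
    Measurable (η a) :=
  (hC.1.comp (Continuous.prodMk_right a)).measurable

theorem CondC1.eventually_lintegral_abs_sub_le (hC : CondC1 η ν) {ε : ℝ} (hε : 0 < ε) :
    ∀ᶠ p in uniformity A, ∫⁻ y, ENNReal.ofReal |η p.1 y - η p.2 y| ∂ν ≤ ENNReal.ofReal ε := by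
  obtain ⟨-, h, -, -, -, ⟨M, hM, hhM⟩, hη⟩ := hC
  obtain ⟨δ, hδ, hδη⟩ := hη (ε / (M.toReal + 1)) (by positivity)
  refine Metric.mem_uniformity_dist.2 ⟨δ, hδ, fun a a' haa' => ?_⟩
  calc ∫⁻ y, ENNReal.ofReal |η a y - η a' y| ∂ν
      ≤ ∫⁻ y, ENNReal.ofReal (ε / (M.toReal + 1)) * ENNReal.ofReal (h a' y) ∂ν :=
        lintegral_mono fun y => by
          rw [← ENNReal.ofReal_mul (by positivity)]
          exact ENNReal.ofReal_le_ofReal (hδη a' a haa' y).le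
    _ ≤ ENNReal.ofReal (ε / (M.toReal + 1)) * ENNReal.ofReal M.toReal := by
        rw [lintegral_const_mul' _ _ ENNReal.ofReal_ne_top, ENNReal.ofReal_toReal hM]
        exact mul_le_mul' le_rfl (hhM a')
    _ ≤ ENNReal.ofReal ε := by
        rw [← ENNReal.ofReal_mul (by positivity)]
        refine ENNReal.ofReal_le_ofReal ?_
        rw [div_mul_eq_mul_div, div_le_iff₀ (by positivity)]
        nlinarith [ENNReal.toReal_nonneg (a := M)]

end ConditionC1

theorem eventually_lintegral_abs_prod_sub_prod_le {A : Type*} [PseudoMetricSpace A]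
    [MeasurableSpace A] {ι : Type*} [Fintype ι] {Y : ι → Type*} [∀ i, TopologicalSpace (Y i)]
    [∀ i, MeasurableSpace (Y i)] [∀ i, OpensMeasurableSpace (Y i)]
    {ν : ∀ i, Measure (Y i)} {η : ∀ i, A → Y i → ℝ} (hηnn : ∀ i a y, 0 ≤ η i a y)
    (hC1 : ∀ i, CondC1 (η i) (ν i)) (hnorm : ∀ i a, ∫⁻ y, ENNReal.ofReal (η i a y) ∂ν i ≤ 1)
    {ε : ℝ} (hε : 0 < ε) :
    ∀ᶠ p in uniformity A, ∫⁻ y, ENNReal.ofReal |∏ i, η i p.1 (y i) - ∏ i, η i p.2 (y i)|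
      ∂Measure.pi ν ≤ ENNReal.ofReal ε := by
  set n := Fintype.card ι
  have hε' : 0 < ε / (2 ^ n * (n + 1)) := by positivity
  filter_upwards [eventually_all.2 fun i => (hC1 i).eventually_lintegral_abs_sub_le hε'] with p hp
  calc _ ≤ 2 ^ n * ∑ i, ∫⁻ y, ENNReal.ofReal |η i p.1 y - η i p.2 y| ∂ν i :=
        lintegral_abs_prod_sub_prod_le (fun i => hηnn i p.1) (fun i => hηnn i p.2)
          (fun i => (hC1 i).measurable_apply p.1) (fun i => (hC1 i).measurable_apply p.2)
          (fun i => hnorm i p.1) (fun i => hnorm i p.2)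
    _ ≤ 2 ^ n * ∑ _i : ι, ENNReal.ofReal (ε / (2 ^ n * (n + 1))) := by gcongr with i; exact hp i
    _ = ENNReal.ofReal (2 ^ n * n * (ε / (2 ^ n * (n + 1)))) := by
        rw [Finset.sum_const, Finset.card_univ, nsmul_eq_mul, ENNReal.ofReal_mul (by positivity),
          ENNReal.ofReal_mul (by positivity), ENNReal.ofReal_pow zero_le_two,
          ENNReal.ofReal_natCast, ENNReal.ofReal_ofNat, mul_assoc]
    _ ≤ ENNReal.ofReal ε := by
        refine ENNReal.ofReal_le_ofReal ?_
        rw [mul_div_assoc', div_le_iff₀ (by positivity)]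
        nlinarith [pow_pos (two_pos (α := ℝ)) n]

theorem stmt_2_general {N : ℕ}
    {A C : Type*} {B Y : Fin N → Type*}
    [MetricSpace A] [MeasurableSpace A]
    [MetricSpace C]
    [∀ i, MetricSpace (B i)] [∀ i, SeparableSpace (B i)]
    [∀ i, MeasurableSpace (B i)] [∀ i, BorelSpace (B i)]
    [∀ i, MetricSpace (Y i)]
    [∀ i, MeasurableSpace (Y i)] [∀ i, BorelSpace (Y i)]
    (ν : ∀ i, Measure (Y i))
    (η : ∀ i, A → Y i → ℝ) (hηnn : ∀ i a y, 0 ≤ η i a y)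
    (hC1 : ∀ i, CondC1 (η i) (ν i))
    (hnorm : ∀ i a, (∫⁻ y, ENNReal.ofReal (η i a y) ∂(ν i)) = 1)
    (g : A → (∀ i, B i) → C → ℝ)
    (hgbdd : ∃ M : ℝ, ∀ a b c, |g a b c| ≤ M)
    (hguc : UniformContinuous (fun p : A × (∀ i, B i) × C => g p.1 p.2.1 p.2.2))
    (f : (∀ i, Kernel (Y i) (B i)) → A × C → ℝ)
    (hf : ∀ (κ : ∀ i, Kernel (Y i) (B i)), (∀ i, IsMarkovKernel (κ i)) → ∀ a c,
      f κ (a, c) =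
        ∫ y : ∀ i, Y i,
          (∫ b : ∀ i, B i, g a b c ∂(Measure.pi fun i => κ i (y i))) *
            (∏ i, η i a (y i)) ∂(Measure.pi ν)) :
    (∀ M : ℝ, (∀ a b c, |g a b c| ≤ M) →
      ∀ (κ : ∀ i, Kernel (Y i) (B i)), (∀ i, IsMarkovKernel (κ i)) →
        ∀ z : A × C, |f κ z| ≤ M) ∧
    (∀ ε : ℝ, 0 < ε → ∃ δ : ℝ, 0 < δ ∧
      ∀ (κ : ∀ i, Kernel (Y i) (B i)), (∀ i, IsMarkovKernel (κ i)) →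
        ∀ z z' : A × C, dist z z' < δ → |f κ z - f κ z'| < ε) := by
  have hηm : ∀ i a, Measurable (η i a) := fun i a => (hC1 i).measurable_apply a
  have hw1 : ∀ a, ∫⁻ y, ENNReal.ofReal (∏ i, η i a (y i)) ∂Measure.pi ν ≤ 1 := fun a =>
    lintegral_ofReal_prod_le_one (fun i => hηnn i a) (fun i => hηm i a) fun i => (hnorm i a).le
  have hgm : ∀ a c, Measurable fun b => g a b c := fun a c =>
    (hguc.continuous.comp (by fun_prop : Continuous fun b : ∀ i, B i => (a, b, c))).measurable
  refine ⟨fun M hM κ hκ ⟨a, c⟩ => ?_, fun ε hε => ?_⟩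
  · have : ∀ i, Nonempty (Y i) := fun i =>
      (isEmpty_or_nonempty (Y i)).resolve_left fun _ => by simpa using hnorm i a
    rw [hf κ hκ a c]
    exact abs_integral_integral_mul_le (Kernel.pi κ) (hM a · c)
      (fun y => Finset.prod_nonneg fun i _ => hηnn i a (y i)) (hw1 a)
  · obtain ⟨M, hM⟩ := hgbdd
    have hwc : ∀ ε > 0, ∀ᶠ pq in uniformity (A × C), ∫⁻ y, ENNReal.ofReal
        |∏ i, η i pq.1.1 (y i) - ∏ i, η i pq.2.1 (y i)| ∂Measure.pi ν ≤ ENNReal.ofReal ε :=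
      fun ε hε => uniformContinuous_fst.eventually
        (eventually_lintegral_abs_prod_sub_prod_le hηnn hC1 (fun i a => (hnorm i a).le) hε)
    have hF := uniformEquicontinuous_integral_integral_mul (μ := Measure.pi ν)
      (G := fun (p : A × C) b => g p.1 b p.2) (w := fun p y => ∏ i, η i p.1 (y i))
      (fun p => hgm p.1 p.2) (fun p b => hM p.1 b p.2) hguc.uniformEquicontinuous_middle
      (fun p => Finset.measurable_prod _ fun i _ => (hηm i p.1).comp (measurable_pi_apply i))
      (fun p y => Finset.prod_nonneg fun i _ => hηnn i p.1 (y i)) (fun p => hw1 p.1) hwc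
    obtain ⟨δ, hδ, H⟩ := Metric.uniformEquicontinuous_iff.1 hF ε hε
    refine ⟨δ, hδ, fun κ hκ ⟨a, c⟩ ⟨a', c'⟩ hd => ?_⟩
    rw [hf κ hκ a c, hf κ hκ a' c', ← Real.dist_eq]
    exact H _ _ hd ⟨Kernel.pi κ, inferInstance⟩

/-- The family `{f_{κ¹,…,κᴺ}}` over all N-tuples of Markov kernels is uniformly bounded
by `sup |g|` and uniformly equicontinuous on `A × C`. -/
theorem stmt_2 {N : ℕ}
    {A C : Type*} {B Y : Fin N → Type*}
    [MetricSpace A] [CompleteSpace A] [SeparableSpace A] [MeasurableSpace A] [BorelSpace A]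
    [MetricSpace C] [CompleteSpace C] [SeparableSpace C] [MeasurableSpace C] [BorelSpace C]
    [∀ i, MetricSpace (B i)] [∀ i, CompleteSpace (B i)] [∀ i, SeparableSpace (B i)]
    [∀ i, MeasurableSpace (B i)] [∀ i, BorelSpace (B i)]
    [∀ i, MetricSpace (Y i)] [∀ i, CompleteSpace (Y i)] [∀ i, SeparableSpace (Y i)]
    [∀ i, MeasurableSpace (Y i)] [∀ i, BorelSpace (Y i)]
    (ν : ∀ i, Measure (Y i))
    (η : ∀ i, A → Y i → ℝ) (hηnn : ∀ i a y, 0 ≤ η i a y)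
    (hC1 : ∀ i, CondC1 (η i) (ν i))
    (hnorm : ∀ i a, (∫⁻ y, ENNReal.ofReal (η i a y) ∂(ν i)) = 1)
    (g : A → (∀ i, B i) → C → ℝ)
    (hgbdd : ∃ M : ℝ, ∀ a b c, |g a b c| ≤ M)
    (hguc : UniformContinuous (fun p : A × (∀ i, B i) × C => g p.1 p.2.1 p.2.2))
    (f : (∀ i, Kernel (Y i) (B i)) → A × C → ℝ)
    (hf : ∀ (κ : ∀ i, Kernel (Y i) (B i)), (∀ i, IsMarkovKernel (κ i)) → ∀ a c,
      f κ (a, c) =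
        ∫ y : ∀ i, Y i,
          (∫ b : ∀ i, B i, g a b c ∂(Measure.pi fun i => κ i (y i))) *
            (∏ i, η i a (y i)) ∂(Measure.pi ν)) :
    (∀ M : ℝ, (∀ a b c, |g a b c| ≤ M) →
      ∀ (κ : ∀ i, Kernel (Y i) (B i)), (∀ i, IsMarkovKernel (κ i)) →
        ∀ z : A × C, |f κ z| ≤ M) ∧
    (∀ ε : ℝ, 0 < ε → ∃ δ : ℝ, 0 < δ ∧
      ∀ (κ : ∀ i, Kernel (Y i) (B i)), (∀ i, IsMarkovKernel (κ i)) →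
        ∀ z z' : A × C, dist z z' < δ → |f κ z - f κ z'| < ε) :=
  stmt_2_general ν η hηnn hC1 hnorm g hgbdd hguc f hf
end
end

section
/- Let A, B, C be Polish spaces, ν a nonnegative countably additive Borel measure on A, and ρ : A × B → ℝ a bounded continuous function such that ρ(·,b)ν is a probability measure on A for every b ∈ B and the pair ((b,a) ↦ ρ(a,b), ν) satisfies Condition C1 (with conditioning variable b ∈ B and integration variable a ∈ A). Let ζ be a Borel probability measure on A × B satisfying ζ(da,db) = ρ(a,b) ν(da) ζ_B(db), where ζ_B is the B-marginal of ζ. Let (κ_n)_{n∈ℕ} be Markov kernels from B to C and define μ_n ∈ P(A×B×C) by μ_n(da,db,dc) = κ_n(b)(dc) ζ(da,db). If μ_n converges weakly to some Borel probability measure μ₀ on A × B × C, then there exists a Markov kernel κ₀ from B to C such that μ₀(da,db,dc) = κ₀(b)(dc) ζ(da,db). -/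
/-!
Conditionally on `b`, the measure `ζ` draws `a` from the density `ρ(·, b) ν`, and `μₙ` then draws
`c` from `κₙ(b)` independently of `a`; so `μₙ(da, db, dc) = ρ(a, b) ν(da) πₙ(db, dc)` with
`πₙ = ζ_B ⊗ κₙ`. Condition C1 dominates `ρ(·, b')` by an integrable function for `b'` near `b`,
so by dominated convergence `G(b, c) = ∫ g(a, b, c) ρ(a, b) ν(da)` is bounded and continuous for
every bounded continuous `g`. Hence the identity `∫ g dμₙ = ∫ G(b, c) dμₙ` passes to the weak
limit, and `μ₀(da, db, dc) = ρ(a, b) ν(da) π₀(db, dc)` for the `(B, C)`-marginal `π₀` of `μ₀`.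
The `B`-marginal of `π₀` is still `ζ_B`, so disintegrating `π₀ = ζ_B ⊗ κ₀` gives the kernel.
-/

open MeasureTheory ProbabilityTheory Filter Topology TopologicalSpace
open scoped ENNReal NNReal

noncomputable section

/-- Weak convergence of a sequence of (Borel) measures: integrals of every bounded
continuous real-valued function converge. -/
def WeakConv {S : Type*} [TopologicalSpace S] [MeasurableSpace S]
    (μ : ℕ → Measure S) (μ₀ : Measure S) : Prop :=
  ∀ g : BoundedContinuousFunction S ℝ,
    Tendsto (fun n => ∫ x, g x ∂(μ n)) atTop (𝓝 (∫ x, g x ∂μ₀))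

open scoped BoundedContinuousFunction

namespace MeasureTheory.Measure

variable {X Y Z : Type*} [MeasurableSpace X] [MeasurableSpace Y] [MeasurableSpace Z]

lemma bind_map_eq_map_compProd (μ : Measure X) [SFinite μ] (k : Kernel X Y) [IsSFiniteKernel k]
    {e : X → Y → Z} (he : Measurable fun q : X × Y => e q.1 q.2) :
    μ.bind (fun x => (k x).map (e x)) = (μ ⊗ₘ k).map (fun q => e q.1 q.2) := by
  have hex : ∀ x, Measurable (e x) := fun x => he.comp measurable_prodMk_left
  have hslice : ∀ x {s : Set Z}, MeasurableSet s →
      (k x).map (e x) s = k x (Prod.mk x ⁻¹' ((fun q : X × Y => e q.1 q.2) ⁻¹' s)) :=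
    fun x s hs => map_apply (hex x) hs
  have hmeas : Measurable fun x => (k x).map (e x) :=
    measurable_of_measurable_coe _ fun s hs => by
      simpa only [hslice _ hs] using Kernel.measurable_kernel_prodMk_left (he hs)
  ext s hs
  rw [bind_apply hs hmeas.aemeasurable, map_apply he hs, compProd_apply (he hs)]
  simp only [hslice _ hs]

lemma lintegral_bind_map (μ : Measure X) [SFinite μ] (k : Kernel X Y) [IsSFiniteKernel k]
    {e : X → Y → Z} (he : Measurable fun q : X × Y => e q.1 q.2) {f : Z → ℝ≥0∞}
    (hf : Measurable f) :
    ∫⁻ z, f z ∂μ.bind (fun x => (k x).map (e x)) = ∫⁻ x, ∫⁻ y, f (e x y) ∂k x ∂μ := by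
  rw [bind_map_eq_map_compProd μ k he, lintegral_map hf he]
  exact lintegral_compProd (hf.comp he)

lemma integral_bind_map (μ : Measure X) [SFinite μ] (k : Kernel X Y) [IsSFiniteKernel k]
    {e : X → Y → Z} (he : Measurable fun q : X × Y => e q.1 q.2) {f : Z → ℝ}
    (hf : Integrable f (μ.bind (fun x => (k x).map (e x)))) :
    ∫ z, f z ∂μ.bind (fun x => (k x).map (e x)) = ∫ x, ∫ y, f (e x y) ∂k x ∂μ := by
  rw [bind_map_eq_map_compProd μ k he] at hf ⊢
  rw [integral_map he.aemeasurable hf.aestronglyMeasurable]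
  exact integral_compProd (hf.comp_measurable he)

end MeasureTheory.Measure

section prependKernel

open Measure

variable {A B C : Type*} [MeasurableSpace A] [MeasurableSpace B] [MeasurableSpace C]

/-- `prependKernel κ π (da, db, dc) = κ(b)(da) π(db, dc)`. -/
def prependKernel (κ : Kernel B A) (π : Measure (B × C)) : Measure (A × B × C) :=
  π.bind fun q => (κ q.1).map fun a => (a, q.1, q.2)

variable (κ : Kernel B A) (π : Measure (B × C))

lemma prependKernel_eq_map_compProd [IsSFiniteKernel κ] [SFinite π] :
    prependKernel κ π = (π ⊗ₘ κ.comap Prod.fst measurable_fst).map fun p => (p.2, p.1.1, p.1.2) :=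
  bind_map_eq_map_compProd π (κ.comap Prod.fst measurable_fst) (by fun_prop)

lemma lintegral_prependKernel [IsSFiniteKernel κ] [SFinite π] {f : A × B × C → ℝ≥0∞}
    (hf : Measurable f) :
    ∫⁻ x, f x ∂prependKernel κ π = ∫⁻ q, ∫⁻ a, f (a, q.1, q.2) ∂κ q.1 ∂π :=
  lintegral_bind_map π (κ.comap Prod.fst measurable_fst) (by fun_prop) hf

lemma integral_prependKernel [IsSFiniteKernel κ] [SFinite π] {f : A × B × C → ℝ}
    (hf : Integrable f (prependKernel κ π)) :
    ∫ x, f x ∂prependKernel κ π = ∫ q, ∫ a, f (a, q.1, q.2) ∂κ q.1 ∂π :=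
  integral_bind_map π (κ.comap Prod.fst measurable_fst) (by fun_prop) hf

lemma map_snd_prependKernel [IsMarkovKernel κ] [SFinite π] :
    (prependKernel κ π).map Prod.snd = π := by
  rw [prependKernel_eq_map_compProd, map_map measurable_snd (by fun_prop)]
  exact fst_compProd π _

instance [IsMarkovKernel κ] [IsFiniteMeasure π] : IsFiniteMeasure (prependKernel κ π) := by
  rw [prependKernel_eq_map_compProd]
  infer_instance

lemma bind_bind_map_eq_prependKernel (μ : Measure B) [SFinite μ] (κ : Kernel B A)
    [IsSFiniteKernel κ] (η : Kernel B C) [IsSFiniteKernel η] :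
    (μ.bind fun b => (κ b).map fun a => (a, b)).bind (fun p => (η p.2).map fun c => (p.1, p.2, c))
      = prependKernel κ (μ ⊗ₘ η) := by
  rw [bind_map_eq_map_compProd μ κ (e := fun b a => (a, b)) (by fun_prop)]
  refine ext_of_lintegral _ fun f hf => ?_
  have hη : Measurable fun p : A × B => ∫⁻ c, f (p.1, p.2, c) ∂η p.2 :=
    Measurable.lintegral_kernel_prod_right (κ := η.comap Prod.snd measurable_snd)
      (f := fun p c => f (p.1, p.2, c)) (by fun_prop)
  have hκ : Measurable fun q : B × C => ∫⁻ a, f (a, q.1, q.2) ∂κ q.1 :=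
    Measurable.lintegral_kernel_prod_right (κ := κ.comap Prod.fst measurable_fst)
      (f := fun q a => f (a, q.1, q.2)) (by fun_prop)
  calc _ = ∫⁻ p, ∫⁻ c, f (p.1, p.2, c) ∂η p.2 ∂(μ ⊗ₘ κ).map fun q => (q.2, q.1) :=
        lintegral_bind_map _ (η.comap Prod.snd measurable_snd) (by fun_prop) hf
    _ = ∫⁻ b, ∫⁻ a, ∫⁻ c, f (a, b, c) ∂η b ∂κ b ∂μ := by
        rw [lintegral_map hη (by fun_prop)]
        exact lintegral_compProd (hη.comp (by fun_prop))
    _ = ∫⁻ b, ∫⁻ c, ∫⁻ a, f (a, b, c) ∂κ b ∂η b ∂μ := by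
        congr with b
        exact lintegral_lintegral_swap (by fun_prop)
    _ = _ := by
        rw [lintegral_prependKernel _ _ hf]
        exact (lintegral_compProd hκ).symm

end prependKernel

lemma CondC1.exists_integrable_eventually_le_add {A Y : Type*} [PseudoMetricSpace A]
    [MeasurableSpace A] [TopologicalSpace Y] [MeasurableSpace Y] {η : A → Y → ℝ}
    {ν : Measure Y} (hC : CondC1 η ν) (a₀ : A) :
    ∃ H : Y → ℝ, Integrable H ν ∧ ∀ᶠ a in 𝓝 a₀, ∀ y, η a y ≤ η a₀ y + H y := by
  obtain ⟨-, h, h_nonneg, h_meas, -, ⟨M, hM, h_le⟩, h_var⟩ := hC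
  obtain ⟨δ, hδ, hδ_var⟩ := h_var 1 one_pos
  refine ⟨h a₀, ⟨(h_meas.comp measurable_prodMk_left).aestronglyMeasurable, ?_⟩,
    Metric.eventually_nhds_iff.mpr ⟨δ, hδ, fun a ha y => ?_⟩⟩
  · rw [hasFiniteIntegral_iff_ofReal (.of_forall (h_nonneg a₀))]
    exact (h_le a₀).trans_lt hM.lt_top
  · linarith [(abs_lt.mp (hδ_var a₀ a ha y)).2]

namespace WeakConv

variable {S : Type*} [TopologicalSpace S] [MeasurableSpace S] {μ : ℕ → Measure S}
  {μ₀ : Measure S}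

lemma map [OpensMeasurableSpace S] {T : Type*} [TopologicalSpace T] [MeasurableSpace T]
    [BorelSpace T] (h : WeakConv μ μ₀) {f : S → T} (hf : Continuous f) :
    WeakConv (fun n => (μ n).map f) (μ₀.map f) := by
  intro g
  simp only [integral_map hf.measurable.aemeasurable g.continuous.aestronglyMeasurable]
  exact h (g.compContinuous ⟨f, hf⟩)

lemma unique [HasOuterApproxClosed S] [BorelSpace S] {μ₁ : Measure S} [IsFiniteMeasure μ₀]
    [IsFiniteMeasure μ₁] (h₀ : WeakConv μ μ₀) (h₁ : WeakConv μ μ₁) : μ₀ = μ₁ :=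
  ext_of_forall_integral_eq_of_IsFiniteMeasure fun g => tendsto_nhds_unique (h₀ g) (h₁ g)

lemma map_eq_of_forall_map_eq [OpensMeasurableSpace S] {T : Type*} [TopologicalSpace T]
    [HasOuterApproxClosed T] [MeasurableSpace T] [BorelSpace T] (h : WeakConv μ μ₀)
    [IsFiniteMeasure μ₀] {f : S → T} (hf : Continuous f) {ν : Measure T} [IsFiniteMeasure ν]
    (hν : ∀ n, (μ n).map f = ν) : μ₀.map f = ν :=
  (h.map hf).unique fun g => by simpa only [hν] using tendsto_const_nhds

end WeakConv

section density

variable {A D : Type*} [TopologicalSpace A] [MeasurableSpace A] [OpensMeasurableSpace A]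
  [TopologicalSpace D] [FirstCountableTopology D] {ν : Measure A} {ρ : A → D → ℝ}

lemma continuous_withDensity_apply
    (hρ : Continuous fun p : A × D => ρ p.1 p.2)
    (hfin : ∀ d, ∫⁻ a, ENNReal.ofReal (ρ a d) ∂ν ≠ ∞)
    (hdom : ∀ d₀, ∃ H : A → ℝ, Integrable H ν ∧ ∀ᶠ d in 𝓝 d₀, ∀ a, ρ a d ≤ ρ a d₀ + H a)
    {s : Set A} (hs : MeasurableSet s) :
    Continuous fun d => ν.withDensity (fun a => ENNReal.ofReal (ρ a d)) s := by
  simp only [withDensity_apply _ hs]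
  refine continuous_iff_continuousAt.mpr fun d₀ => ?_
  obtain ⟨H, hH, hle⟩ := hdom d₀
  have hρ_meas : ∀ d, Measurable fun a => ENNReal.ofReal (ρ a d) := fun d => by fun_prop
  refine tendsto_lintegral_filter_of_dominated_convergence
    (fun a => ENNReal.ofReal (ρ a d₀) + ENNReal.ofReal (H a)) (.of_forall fun d => hρ_meas d)
    (hle.mono fun d hd => .of_forall fun a => ?_) ?_ (.of_forall fun a => ?_)
  · exact (ENNReal.ofReal_le_ofReal (hd a)).trans ENNReal.ofReal_add_le
  · refine ne_top_of_le_ne_top ?_ (setLIntegral_le_lintegral s _)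
    rw [lintegral_add_left (hρ_meas d₀)]
    exact ENNReal.add_ne_top.mpr ⟨hfin d₀, hH.lintegral_lt_top.ne⟩
  · exact (ENNReal.continuous_ofReal.comp (by fun_prop : Continuous fun d => ρ a d)).continuousAt

lemma continuous_integral_withDensity
    (hρ : Continuous fun p : A × D => ρ p.1 p.2)
    (hfin : ∀ d, ∫⁻ a, ENNReal.ofReal (ρ a d) ∂ν ≠ ∞)
    (hdom : ∀ d₀, ∃ H : A → ℝ, Integrable H ν ∧ ∀ᶠ d in 𝓝 d₀, ∀ a, ρ a d ≤ ρ a d₀ + H a)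
    {g : A → D → ℝ} (hg : Continuous fun p : A × D => g p.1 p.2) {C : ℝ}
    (hgC : ∀ a d, ‖g a d‖ ≤ C) :
    Continuous fun d => ∫ a, g a d ∂ν.withDensity (fun a => ENNReal.ofReal (ρ a d)) := by
  have hrw : ∀ d, ∫ a, g a d ∂ν.withDensity (fun a => ENNReal.ofReal (ρ a d))
      = ∫ a, max (ρ a d) 0 * g a d ∂ν := fun d => by
    rw [integral_withDensity_eq_integral_toReal_smul (by fun_prop)
      (.of_forall fun _ => ENNReal.ofReal_lt_top)]
    simp only [ENNReal.toReal_ofReal', smul_eq_mul]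
  simp only [hrw]
  refine continuous_iff_continuousAt.mpr fun d₀ => ?_
  obtain ⟨H, hH, hle⟩ := hdom d₀
  have hρ_int : Integrable (fun a => max (ρ a d₀) 0) ν := by
    simpa only [ENNReal.toReal_ofReal'] using
      integrable_toReal_of_lintegral_ne_top (by fun_prop) (hfin d₀)
  refine continuousAt_of_dominated (.of_forall fun d => by fun_prop)
    (hle.mono fun d hd => .of_forall fun a => ?_) ((hρ_int.add hH.abs).mul_const C)
    (.of_forall fun a => by fun_prop)
  rw [norm_mul, Real.norm_of_nonneg (le_max_right _ _), Pi.add_apply]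
  refine mul_le_mul ?_ (hgC a d) (norm_nonneg _) (by positivity)
  exact max_le (by linarith [hd a, le_max_left (ρ a d₀) 0, le_abs_self (H a)]) (by positivity)

end density

lemma CondC1.exists_isMarkovKernel_withDensity {A B : Type*} [TopologicalSpace A]
    [MeasurableSpace A] [OpensMeasurableSpace A] [PseudoMetricSpace B] [MeasurableSpace B]
    [OpensMeasurableSpace B] (C : Type*) [TopologicalSpace C] [FirstCountableTopology C]
    {ν : Measure A} {ρ : A → B → ℝ} (hC1 : CondC1 (fun b a => ρ a b) ν)
    (hρ : Continuous fun p : A × B => ρ p.1 p.2)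
    (hprob : ∀ b, IsProbabilityMeasure (ν.withDensity fun a => ENNReal.ofReal (ρ a b))) :
    ∃ K : Kernel B A, IsMarkovKernel K ∧
      (∀ b, K b = ν.withDensity fun a => ENNReal.ofReal (ρ a b)) ∧
      ∀ g : A × B × C →ᵇ ℝ, Continuous fun q : B × C => ∫ a, g (a, q.1, q.2) ∂K q.1 := by
  have hdom := hC1.exists_integrable_eventually_le_add
  have hfin : ∀ b, ∫⁻ a, ENNReal.ofReal (ρ a b) ∂ν ≠ ∞ := fun b => by
    have := hprob b
    simpa only [withDensity_apply _ MeasurableSet.univ, Measure.restrict_univ] using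
      measure_ne_top (ν.withDensity fun a => ENNReal.ofReal (ρ a b)) Set.univ
  refine ⟨⟨fun b => ν.withDensity fun a => ENNReal.ofReal (ρ a b),
    Measure.measurable_of_measurable_coe _ fun s hs =>
      (continuous_withDensity_apply hρ hfin hdom hs).measurable⟩, ⟨hprob⟩, fun _ => rfl,
    fun g => ?_⟩
  exact continuous_integral_withDensity (ρ := fun a q => ρ a q.1)
    (g := fun a (q : B × C) => g (a, q.1, q.2)) (by fun_prop) (fun q => hfin q.1)
    (fun q₀ => (hdom q₀.1).imp fun _ hH => ⟨hH.1, continuous_fst.continuousAt.eventually hH.2⟩)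
    (by fun_prop) fun _ _ => g.norm_coe_le_norm _

section weakLimit

variable {A B C : Type*}
  [TopologicalSpace A] [PseudoMetrizableSpace A] [MeasurableSpace A] [BorelSpace A]
  [TopologicalSpace B] [PseudoMetrizableSpace B] [SecondCountableTopology B] [MeasurableSpace B]
  [BorelSpace B]
  [TopologicalSpace C] [PseudoMetrizableSpace C] [SecondCountableTopology C] [MeasurableSpace C]
  [BorelSpace C]

lemma eq_prependKernel_map_snd_of_weakConv (κ : Kernel B A) [IsMarkovKernel κ]
    (hκ : ∀ g : A × B × C →ᵇ ℝ, Continuous fun q : B × C => ∫ a, g (a, q.1, q.2) ∂κ q.1)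
    {π : ℕ → Measure (B × C)} [∀ n, IsFiniteMeasure (π n)] {μ₀ : Measure (A × B × C)}
    [IsFiniteMeasure μ₀] (h : WeakConv (fun n => prependKernel κ (π n)) μ₀) :
    μ₀ = prependKernel κ (μ₀.map Prod.snd) := by
  refine ext_of_forall_integral_eq_of_IsFiniteMeasure fun g => ?_
  let G : B × C →ᵇ ℝ := .ofNormedAddCommGroup _ (hκ g) ‖g‖ fun q =>
    (norm_integral_le_of_norm_le_const (.of_forall fun a => g.norm_coe_le_norm _)).trans_eq
      (by simp)
  have hG : ∀ (π : Measure (B × C)) [IsFiniteMeasure π],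
      ∫ x, g x ∂prependKernel κ π = ∫ q, G q ∂π :=
    fun π _ => integral_prependKernel κ π (g.integrable _)
  have hsnd : ∀ μ : Measure (A × B × C), ∫ x, G x.2 ∂μ = ∫ q, G q ∂μ.map Prod.snd :=
    fun μ => (integral_map measurable_snd.aemeasurable G.continuous.aestronglyMeasurable).symm
  have hlim : Tendsto (fun n => ∫ x, g x ∂prependKernel κ (π n)) atTop
      (𝓝 (∫ x, G x.2 ∂μ₀)) := by
    have hgG : ∀ n, ∫ x, g x ∂prependKernel κ (π n) = ∫ x, G x.2 ∂prependKernel κ (π n) :=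
      fun n => by rw [hG, hsnd, map_snd_prependKernel]
    simp only [hgG]
    exact h (G.compContinuous ⟨Prod.snd, continuous_snd⟩)
  rw [tendsto_nhds_unique (h g) hlim, hsnd, hG]

end weakLimit

theorem stmt_4_general
    {A B C : Type*}
    [MetricSpace A] [SeparableSpace A] [MeasurableSpace A] [BorelSpace A]
    [MetricSpace B] [SeparableSpace B] [MeasurableSpace B] [BorelSpace B]
    [MetricSpace C] [CompleteSpace C] [SeparableSpace C] [MeasurableSpace C] [BorelSpace C]
    (ν : Measure A)
    (ρ : A → B → ℝ)
    (hρcont : Continuous (fun p : A × B => ρ p.1 p.2))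
    (hρprob : ∀ b, IsProbabilityMeasure (ν.withDensity fun a => ENNReal.ofReal (ρ a b)))
    (hC1 : CondC1 (fun (b : B) (a : A) => ρ a b) ν)
    (ζ : Measure (A × B)) (hζprob : IsProbabilityMeasure ζ)
    (hζdec : ζ = (ζ.map Prod.snd).bind
      (fun b => (ν.withDensity fun a => ENNReal.ofReal (ρ a b)).map (fun a => (a, b))))
    (κ : ℕ → Kernel B C) (hκ : ∀ n, IsMarkovKernel (κ n))
    (μ₀ : Measure (A × B × C)) (hμ₀ : IsProbabilityMeasure μ₀)
    (hconv : WeakConv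
      (fun n => ζ.bind (fun p => ((κ n) p.2).map (fun c => (p.1, p.2, c)))) μ₀) :
    ∃ κ₀ : Kernel B C, IsMarkovKernel κ₀ ∧
      μ₀ = ζ.bind (fun p => (κ₀ p.2).map (fun c => (p.1, p.2, c))) := by
  obtain ⟨Kρ, _, hKρ_apply, hKρ⟩ := hC1.exists_isMarkovKernel_withDensity C hρcont hρprob
  simp only [← hKρ_apply] at hζdec
  set ζB := ζ.map Prod.snd
  have hμ (k : Kernel B C) [IsMarkovKernel k] :
      ζ.bind (fun p => (k p.2).map fun c => (p.1, p.2, c)) = prependKernel Kρ (ζB ⊗ₘ k) := by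
    rw [hζdec]
    exact bind_bind_map_eq_prependKernel ζB Kρ k
  have hconv' : WeakConv (fun n => prependKernel Kρ (ζB ⊗ₘ κ n)) μ₀ := by
    simpa only [hμ] using hconv
  have hmarg : (μ₀.map Prod.snd).fst = ζB := by
    rw [Measure.fst, Measure.map_map measurable_fst measurable_snd]
    refine hconv'.map_eq_of_forall_map_eq (by fun_prop) fun n => ?_
    rw [← Measure.map_map measurable_fst measurable_snd, map_snd_prependKernel, ← Measure.fst,
      Measure.fst_compProd]
  have := (nonempty_of_isProbabilityMeasure μ₀).map fun x => x.2.2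
  refine ⟨(μ₀.map Prod.snd).condKernel, inferInstance, ?_⟩
  rw [hμ, ← hmarg, Measure.disintegrate]
  exact eq_prependKernel_map_snd_of_weakConv Kρ hKρ hconv'

/-- If `μ_n(da,db,dc) = κ_n(b)(dc) ζ(da,db)` converges weakly to `μ₀` and
`ζ(da|b) = ρ(a,b)ν(da)` with `(ρ,ν)` satisfying Condition C1, then the limit `μ₀` also
disintegrates as `μ₀(da,db,dc) = κ₀(b)(dc) ζ(da,db)` for some Markov kernel `κ₀`. -/
theorem stmt_4
    {A B C : Type*}
    [MetricSpace A] [CompleteSpace A] [SeparableSpace A] [MeasurableSpace A] [BorelSpace A]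
    [MetricSpace B] [CompleteSpace B] [SeparableSpace B] [MeasurableSpace B] [BorelSpace B]
    [MetricSpace C] [CompleteSpace C] [SeparableSpace C] [MeasurableSpace C] [BorelSpace C]
    (ν : Measure A)
    (ρ : A → B → ℝ)
    (hρbdd : ∃ M : ℝ, ∀ a b, |ρ a b| ≤ M)
    (hρcont : Continuous (fun p : A × B => ρ p.1 p.2))
    (hρprob : ∀ b, IsProbabilityMeasure (ν.withDensity fun a => ENNReal.ofReal (ρ a b)))
    (hC1 : CondC1 (fun (b : B) (a : A) => ρ a b) ν)
    (ζ : Measure (A × B)) (hζprob : IsProbabilityMeasure ζ)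
    (hζdec : ζ = (ζ.map Prod.snd).bind
      (fun b => (ν.withDensity fun a => ENNReal.ofReal (ρ a b)).map (fun a => (a, b))))
    (κ : ℕ → Kernel B C) (hκ : ∀ n, IsMarkovKernel (κ n))
    (μ₀ : Measure (A × B × C)) (hμ₀ : IsProbabilityMeasure μ₀)
    (hconv : WeakConv
      (fun n => ζ.bind (fun p => ((κ n) p.2).map (fun c => (p.1, p.2, c)))) μ₀) :
    ∃ κ₀ : Kernel B C, IsMarkovKernel κ₀ ∧
      μ₀ = ζ.bind (fun p => (κ₀ p.2).map (fun c => (p.1, p.2, c))) :=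
  stmt_4_general ν ρ hρcont hρprob hC1 ζ hζprob hζdec κ hκ μ₀ hμ₀ hconv
end
end

section
/- Let A and B be metric spaces, let φ₁ : A × B → [0,∞) be a measurable function in class IC(A,B), and let φ₂ : A → (0,∞) be lower semicontinuous and strictly positive everywhere. Then the product function φ(a,b) := φ₁(a,b)·φ₂(a) is also in class IC(A,B). -/
/-- Class `IC(A,B)` (two-variable form): for every `M > 0` and every compact `K ⊆ A`
there is a compact `L ⊆ B` such that `φ ≥ M` on `K × Lᶜ`. -/
def ClassIC2 {A B : Type*} [TopologicalSpace A] [TopologicalSpace B]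
    (φ : A → B → ℝ) : Prop :=
  ∀ M : ℝ, 0 < M → ∀ K : Set A, IsCompact K →
    ∃ L : Set B, IsCompact L ∧ ∀ a ∈ K, ∀ b ∉ L, M ≤ φ a b

theorem IsCompact.exists_pos_forall_le_of_lowerSemicontinuousOn {α : Type*} [TopologicalSpace α]
    {f : α → ℝ} {K : Set α} (hK : IsCompact K) (hf : LowerSemicontinuousOn f K)
    (hpos : ∀ a ∈ K, 0 < f a) : ∃ c, 0 < c ∧ ∀ a ∈ K, c ≤ f a := by
  rcases K.eq_empty_or_nonempty with rfl | hne
  · exact ⟨1, one_pos, by simp⟩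
  · obtain ⟨a₀, ha₀, hmin⟩ := hf.exists_isMinOn hne hK
    exact ⟨f a₀, hpos a₀ ha₀, fun a ha => hmin ha⟩

theorem ClassIC2.mul_of_lowerSemicontinuous {A B : Type*} [TopologicalSpace A]
    [TopologicalSpace B] {φ : A → B → ℝ} (hφ : ClassIC2 φ) {ψ : A → ℝ}
    (hψpos : ∀ a, 0 < ψ a) (hψ : LowerSemicontinuous ψ) :
    ClassIC2 (fun a b => φ a b * ψ a) := by
  intro M hM K hK
  obtain ⟨c, hc, hψc⟩ :=
    hK.exists_pos_forall_le_of_lowerSemicontinuousOn (hψ.lowerSemicontinuousOn K)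
      fun a _ => hψpos a
  obtain ⟨L, hL, hφL⟩ := hφ (M / c) (div_pos hM hc) K hK
  refine ⟨L, hL, fun a ha b hb => ?_⟩
  have hMc : M / c ≤ φ a b := hφL a ha b hb
  calc M = M / c * c := (div_mul_cancel₀ M hc.ne').symm
    _ ≤ φ a b * ψ a := mul_le_mul hMc (hψc a ha) hc.le ((div_pos hM hc).le.trans hMc)

theorem stmt_13_general
    {A B : Type*} [MetricSpace A] [MetricSpace B]
    (φ₁ : A → B → ℝ)
    (hφ₁IC : ClassIC2 φ₁)
    (φ₂ : A → ℝ)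
    (hφ₂pos : ∀ a, 0 < φ₂ a)
    (hφ₂lsc : LowerSemicontinuous φ₂) :
    ClassIC2 (fun a b => φ₁ a b * φ₂ a) :=
  hφ₁IC.mul_of_lowerSemicontinuous hφ₂pos hφ₂lsc

/-- Lemma 5.2 (`lem:phi12`): multiplying a class-`IC(A,B)` function by a strictly
positive lower semicontinuous function of the first variable stays in class `IC(A,B)`. -/
theorem stmt_13
    {A B : Type*} [MetricSpace A] [MetricSpace B]
    [MeasurableSpace A] [BorelSpace A] [MeasurableSpace B] [BorelSpace B]
    (φ₁ : A → B → ℝ)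
    (hφ₁nn : ∀ a b, 0 ≤ φ₁ a b)
    (hφ₁meas : Measurable (fun p : A × B => φ₁ p.1 p.2))
    (hφ₁IC : ClassIC2 φ₁)
    (φ₂ : A → ℝ)
    (hφ₂pos : ∀ a, 0 < φ₂ a)
    (hφ₂lsc : LowerSemicontinuous φ₂) :
    ClassIC2 (fun a b => φ₁ a b * φ₂ a) :=
  stmt_13_general φ₁ hφ₁IC φ₂ hφ₂pos hφ₂lsc
end

section
/- (Existence of optimal encoding and decoding strategies for the Gaussian test channel.) Let σ₁ > 0, σ_w > 0 and λ > 0. Let X₁ and W₂ be independent real-valued random variables with X₁ ~ N(0,σ₁²) and W₂ ~ N(0,σ_w²). For Borel measurable functions γ₁, γ₂ : ℝ → ℝ define J(γ₁,γ₂) = E[λ·γ₁(X₁)² + (γ₂(γ₁(X₁) + W₂) − X₁)²], valued in [0,∞]. Then the infimum of J over all pairs of Borel measurable functions γ₁, γ₂ : ℝ → ℝ is finite and is attained: there exist Borel measurable γ₁*, γ₂* : ℝ → ℝ with J(γ₁*,γ₂*) = inf_{γ₁,γ₂ Borel measurable} J(γ₁,γ₂). -/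
/-!
For an admissible pair with power `P = E[γ₁(X₁)²]` and distortion `D = E[(γ₂(Y) - X₁)²]`,
`Y = γ₁(X₁) + W₂`, compare the true law of `(X₁, W₂)` with the auxiliary law under which
`Y ∼ N(0, P + σ_w²)` and, given `Y`, `X₁ ∼ N(γ₂(Y), t)` with `t = σ₁²σ_w² / (P + σ_w²)`.
Gibbs' inequality for the explicit Gaussian log-density ratio yields `D ≥ t`, so the cost is at
least `λP + σ₁²σ_w² / (P + σ_w²)`. Linear strategies attain this bound for every `P ≥ 0`, and this
function of `P` is continuous and grows linearly, so it has a minimiser on `[0, ∞)`.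
-/

open MeasureTheory ProbabilityTheory Real
open scoped ENNReal NNReal

local notation "𝒩₂[" V₁ ", " V_w "]" => Measure.prod (gaussianReal 0 V₁) (gaussianReal 0 V_w)

lemma integral_le_zero_of_lintegral_exp_le_one {α : Type*} [MeasurableSpace α] {μ : Measure α}
    [IsProbabilityMeasure μ] {Q : α → ℝ} (hQ : Integrable Q μ)
    (hexp : ∫⁻ a, ENNReal.ofReal (exp (Q a)) ∂μ ≤ 1) :
    ∫ a, Q a ∂μ ≤ 0 := by
  have hexp_int : Integrable (fun a => exp (Q a)) μ := by
    refine ⟨(continuous_exp.comp_aestronglyMeasurable hQ.1), ?_⟩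
    rw [hasFiniteIntegral_iff_ofReal (.of_forall fun a => (exp_pos _).le)]
    exact hexp.trans_lt ENNReal.one_lt_top
  have hexp_le : ∫ a, exp (Q a) ∂μ ≤ 1 := by
    rw [integral_eq_lintegral_of_nonneg_ae (.of_forall fun a => (exp_pos _).le) hexp_int.1]
    exact ENNReal.toReal_le_of_le_ofReal zero_le_one (by simpa using hexp)
  calc ∫ a, Q a ∂μ ≤ ∫ a, (exp (Q a) - 1) ∂μ :=
        integral_mono hQ (hexp_int.sub (integrable_const 1))
          fun a => by linarith [add_one_le_exp (Q a)]
    _ ≤ 0 := by rw [integral_sub hexp_int (integrable_const 1)]; simpa using hexp_le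

lemma lintegral_lintegral_comp_add_left {α G : Type*} [MeasurableSpace α] [MeasurableSpace G]
    [AddGroup G] [MeasurableAdd G] {μ : Measure α} {ν : Measure G} [SFinite μ] [SFinite ν]
    [ν.IsAddLeftInvariant] {f : G → α → ℝ≥0∞} (hf : Measurable (Function.uncurry f))
    (γ : α → G) :
    ∫⁻ x, ∫⁻ w, f (γ x + w) x ∂ν ∂μ = ∫⁻ y, ∫⁻ x, f y x ∂μ ∂ν := by
  rw [lintegral_lintegral_swap hf.aemeasurable]
  congr with x
  exact lintegral_add_left_eq_self (fun y => f y x) (γ x)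

lemma integral_comp_fst_add_comp_snd_sq {α β : Type*} [MeasurableSpace α] [MeasurableSpace β]
    {μ : Measure α} {ν : Measure β} [IsProbabilityMeasure μ] [IsProbabilityMeasure ν]
    {f : α → ℝ} {g : β → ℝ} (hf : MemLp f 2 μ) (hg : MemLp g 2 ν) (hg₀ : ∫ y, g y ∂ν = 0) :
    ∫ p, (f p.1 + g p.2) ^ 2 ∂μ.prod ν = ∫ x, f x ^ 2 ∂μ + ∫ y, g y ^ 2 ∂ν := by
  have hfg : Integrable (fun p : α × β => 2 * (f p.1 * g p.2)) (μ.prod ν) :=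
    ((hf.integrable one_le_two).mul_prod (hg.integrable one_le_two)).const_mul 2
  have hf₂ := hf.integrable_sq.comp_fst ν
  have hg₂ := hg.integrable_sq.comp_snd μ
  calc ∫ p, (f p.1 + g p.2) ^ 2 ∂μ.prod ν
      = ∫ p, (f p.1 ^ 2 + 2 * (f p.1 * g p.2) + g p.2 ^ 2) ∂μ.prod ν := by
        congr with p; ring
    _ = ∫ x, f x ^ 2 ∂μ + ∫ y, g y ^ 2 ∂ν := by
        rw [integral_add (hf₂.fun_add hfg) hg₂, integral_add hf₂ hfg, integral_const_mul,
          integral_prod_mul f g, hg₀, integral_fun_fst (fun x => f x ^ 2),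
          integral_fun_snd (fun y => g y ^ 2)]
        simp

lemma integral_sq_gaussianReal (v : ℝ≥0) : ∫ x, x ^ 2 ∂gaussianReal 0 v = v := by
  rw [← variance_fun_id_gaussianReal (μ := 0),
    variance_of_integral_eq_zero measurable_id'.aemeasurable (by simp)]

section GaussianChannel

variable {V₁ V_w : ℝ≥0}

lemma gaussianPDFReal_mul_gaussianPDFReal_mul_exp {s t : ℝ≥0} (hst : s * t = V₁ * V_w)
    (x w y m : ℝ) :
    gaussianPDFReal 0 V₁ x * gaussianPDFReal 0 V_w w *
        exp (x ^ 2 / (2 * V₁) + w ^ 2 / (2 * V_w) - y ^ 2 / (2 * s) - (m - x) ^ 2 / (2 * t)) =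
      gaussianPDFReal 0 s y * gaussianPDFReal m t x := by
  have hst' : √(2 * π * V₁) * √(2 * π * V_w) = √(2 * π * s) * √(2 * π * t) := by
    rw [← sqrt_mul (by positivity), ← sqrt_mul (by positivity)]
    congr 1
    have hst_real : (s : ℝ) * t = V₁ * V_w := by exact_mod_cast hst
    linear_combination (2 * π) ^ 2 * hst_real.symm
  simp only [gaussianPDFReal, sub_zero]
  calc _ = (√(2 * π * V₁) * √(2 * π * V_w))⁻¹ *
        exp (-x ^ 2 / (2 * V₁) + -w ^ 2 / (2 * V_w) +
          (x ^ 2 / (2 * V₁) + w ^ 2 / (2 * V_w) - y ^ 2 / (2 * s) - (m - x) ^ 2 / (2 * t))) := by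
        rw [exp_add, exp_add, mul_inv]; ring
    _ = (√(2 * π * s) * √(2 * π * t))⁻¹ *
        exp (-y ^ 2 / (2 * s) + -(x - m) ^ 2 / (2 * t)) := by
        rw [hst']; congr 2; ring
    _ = _ := by rw [exp_add, mul_inv]; ring

/-- `log (dQ / d𝒩₂[V₁, V_w])` at `(x, w)`, where under `Q` the channel output `y = γ x + w` is
`N(0, s)` and, given `y`, the source `x` is `N(ψ y, t)`. -/
noncomputable def logDensityRatio (V₁ V_w s t : ℝ≥0) (γ ψ : ℝ → ℝ) (p : ℝ × ℝ) : ℝ :=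
  p.1 ^ 2 / (2 * V₁) + p.2 ^ 2 / (2 * V_w) - (γ p.1 + p.2) ^ 2 / (2 * s)
    - (ψ (γ p.1 + p.2) - p.1) ^ 2 / (2 * t)

lemma lintegral_exp_logDensityRatio {s t : ℝ≥0} (hV₁ : V₁ ≠ 0) (hV_w : V_w ≠ 0)
    (hs : s ≠ 0) (ht : t ≠ 0) (hst : s * t = V₁ * V_w) {γ ψ : ℝ → ℝ} (hγ : Measurable γ)
    (hψ : Measurable ψ) :
    ∫⁻ p, ENNReal.ofReal (exp (logDensityRatio V₁ V_w s t γ ψ p)) ∂𝒩₂[V₁, V_w] = 1 := by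
  rw [gaussianReal_of_var_ne_zero _ hV₁, gaussianReal_of_var_ne_zero _ hV_w,
    prod_withDensity (measurable_gaussianPDF _ _) (measurable_gaussianPDF _ _),
    lintegral_withDensity_eq_lintegral_mul _ (by fun_prop)
      (by unfold logDensityRatio; fun_prop)]
  have hpoint (p : ℝ × ℝ) : gaussianPDF 0 V₁ p.1 * gaussianPDF 0 V_w p.2 *
      ENNReal.ofReal (exp (logDensityRatio V₁ V_w s t γ ψ p)) =
      gaussianPDF 0 s (γ p.1 + p.2) * gaussianPDF (ψ (γ p.1 + p.2)) t p.1 := by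
    simp only [gaussianPDF, logDensityRatio, ← ENNReal.ofReal_mul (gaussianPDFReal_nonneg _ _ _),
      ← ENNReal.ofReal_mul (mul_nonneg (gaussianPDFReal_nonneg _ _ _)
        (gaussianPDFReal_nonneg _ _ _)), gaussianPDFReal_mul_gaussianPDFReal_mul_exp hst]
  simp only [Pi.mul_apply, hpoint]
  rw [lintegral_prod _ (by fun_prop),
    lintegral_lintegral_comp_add_left (f := fun y x => gaussianPDF 0 s y * gaussianPDF (ψ y) t x)
      (by fun_prop)]
  simp_rw [lintegral_const_mul _ (measurable_gaussianPDF _ _), lintegral_gaussianPDF_eq_one _ ht,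
    mul_one, lintegral_gaussianPDF_eq_one _ hs]

lemma integral_logDensityRatio (hV₁ : V₁ ≠ 0) (hV_w : V_w ≠ 0) (s t : ℝ≥0)
    {γ ψ : ℝ → ℝ} (hP : MemLp γ 2 (gaussianReal 0 V₁))
    (hD : Integrable (fun p : ℝ × ℝ => (ψ (γ p.1 + p.2) - p.1) ^ 2) 𝒩₂[V₁, V_w]) :
    Integrable (logDensityRatio V₁ V_w s t γ ψ) 𝒩₂[V₁, V_w] ∧
      ∫ p, logDensityRatio V₁ V_w s t γ ψ p ∂𝒩₂[V₁, V_w] =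
        1 - (∫ x, γ x ^ 2 ∂gaussianReal 0 V₁ + V_w) / (2 * s) -
          (∫ p, (ψ (γ p.1 + p.2) - p.1) ^ 2 ∂𝒩₂[V₁, V_w]) / (2 * t) := by
  have hW : MemLp (fun w : ℝ => w) 2 (gaussianReal 0 V_w) := memLp_id_gaussianReal 2
  have hX₂ : Integrable (fun p : ℝ × ℝ => p.1 ^ 2 / (2 * V₁)) 𝒩₂[V₁, V_w] :=
    ((memLp_id_gaussianReal 2).integrable_sq.comp_fst _).div_const _
  have hW₂ : Integrable (fun p : ℝ × ℝ => p.2 ^ 2 / (2 * V_w)) 𝒩₂[V₁, V_w] :=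
    (hW.integrable_sq.comp_snd _).div_const _
  have hY₂ : Integrable (fun p : ℝ × ℝ => (γ p.1 + p.2) ^ 2 / (2 * s)) 𝒩₂[V₁, V_w] :=
    ((hP.comp_fst _).add (hW.comp_snd _)).integrable_sq.div_const _
  have half {v : ℝ≥0} (hv : v ≠ 0) : (v : ℝ) / (2 * v) = 1 / 2 := by field_simp
  refine ⟨((hX₂.fun_add hW₂).sub' hY₂).sub' (hD.div_const _), ?_⟩
  simp only [logDensityRatio]
  rw [integral_sub ((hX₂.fun_add hW₂).sub' hY₂) (hD.div_const _),
    integral_sub (hX₂.fun_add hW₂) hY₂, integral_add hX₂ hW₂, integral_div, integral_div,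
    integral_div, integral_div, integral_fun_fst (fun x : ℝ => x ^ 2),
    integral_fun_snd (fun w : ℝ => w ^ 2),
    integral_comp_fst_add_comp_snd_sq hP hW integral_id_gaussianReal]
  simp only [integral_sq_gaussianReal, probReal_univ, one_smul, half hV₁, half hV_w]
  ring

lemma div_le_integral_sq_sub (hV₁ : V₁ ≠ 0) (hV_w : V_w ≠ 0)
    {γ ψ : ℝ → ℝ} (hγ : Measurable γ) (hψ : Measurable ψ) (hP : MemLp γ 2 (gaussianReal 0 V₁))
    (hD : Integrable (fun p : ℝ × ℝ => (ψ (γ p.1 + p.2) - p.1) ^ 2) 𝒩₂[V₁, V_w]) :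
    V₁ * V_w / (∫ x, γ x ^ 2 ∂gaussianReal 0 V₁ + V_w) ≤
      ∫ p, (ψ (γ p.1 + p.2) - p.1) ^ 2 ∂𝒩₂[V₁, V_w] := by
  set P := ∫ x, γ x ^ 2 ∂gaussianReal 0 V₁
  set D := ∫ p, (ψ (γ p.1 + p.2) - p.1) ^ 2 ∂𝒩₂[V₁, V_w]
  set s : ℝ≥0 := ⟨P, integral_nonneg fun x => sq_nonneg _⟩ + V_w
  have hs : s ≠ 0 := by positivity
  set t := V₁ * V_w / s
  have ht : (t : ℝ) = V₁ * V_w / (P + V_w) := by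
    rw [NNReal.coe_div, NNReal.coe_mul]; rfl
  rw [← ht]
  obtain ⟨hQ, hQ_eq⟩ := integral_logDensityRatio hV₁ hV_w s t hP hD
  have hgibbs := integral_le_zero_of_lintegral_exp_le_one hQ
    (lintegral_exp_logDensityRatio hV₁ hV_w hs (by positivity) (mul_div_cancel₀ _ hs) hγ hψ).le
  rw [hQ_eq, show (P + V_w : ℝ) = s from rfl,
    show (s : ℝ) / (2 * s) = 1 / 2 by field_simp] at hgibbs
  have hD_ge : 1 / 2 * (2 * (t : ℝ)) ≤ D := (le_div_iff₀ (by positivity)).1 (by linarith)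
  linarith

noncomputable def channelCost (lam : ℝ) (V₁ V_w : ℝ≥0) (γ₁ γ₂ : ℝ → ℝ) : ℝ≥0∞ :=
  ∫⁻ p, ENNReal.ofReal (lam * γ₁ p.1 ^ 2 + (γ₂ (γ₁ p.1 + p.2) - p.1) ^ 2) ∂𝒩₂[V₁, V_w]

/-- The cost of the best linear scheme of transmit power `P`: its distortion is the linear
least-squares error `V₁ V_w / (P + V_w)` of estimating the source from the channel output. -/
noncomputable def costAtPower (lam : ℝ) (V₁ V_w : ℝ≥0) (P : ℝ) : ℝ := lam * P + V₁ * V_w / (P + V_w)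

lemma exists_isMinOn_costAtPower {lam : ℝ} (hlam : 0 < lam) (hV_w : V_w ≠ 0) :
    ∃ P₀ ∈ Set.Ici (0 : ℝ), IsMinOn (costAtPower lam V₁ V_w) (Set.Ici 0) P₀ := by
  have hcont : ContinuousOn (costAtPower lam V₁ V_w) (Set.Ici 0) :=
    (continuousOn_const.mul continuousOn_id).add
      (continuousOn_const.div (by fun_prop) fun P (hP : 0 ≤ P) => by positivity)
  obtain ⟨P₀, ⟨hP₀, -⟩, hmin⟩ := (isCompact_Icc (a := 0) (b := V₁ / lam)).exists_isMinOn
    (Set.nonempty_Icc.2 (by positivity)) (hcont.mono Set.Icc_subset_Ici_self)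
  refine ⟨P₀, hP₀, fun P (hP : 0 ≤ P) => ?_⟩
  rcases le_or_gt P (V₁ / lam) with hPle | hPgt
  · exact hmin ⟨hP, hPle⟩
  calc costAtPower lam V₁ V_w P₀ ≤ costAtPower lam V₁ V_w 0 := hmin ⟨le_rfl, by positivity⟩
    _ = V₁ := by simp [costAtPower, NNReal.coe_ne_zero.2 hV_w]
    _ ≤ lam * P := ((div_lt_iff₀' hlam).1 hPgt).le
    _ ≤ costAtPower lam V₁ V_w P := le_add_of_nonneg_right (by positivity)

lemma channelCost_linear {lam : ℝ} (hlam : 0 ≤ lam) (a b : ℝ) :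
    channelCost lam V₁ V_w (a * ·) (b * ·) =
      ENNReal.ofReal ((lam * a ^ 2 + (b * a - 1) ^ 2) * V₁ + b ^ 2 * V_w) := by
  have hX : MemLp (fun x : ℝ => (b * a - 1) * x) 2 (gaussianReal 0 V₁) :=
    (memLp_id_gaussianReal 2).const_mul _
  have hW : MemLp (fun w : ℝ => b * w) 2 (gaussianReal 0 V_w) :=
    (memLp_id_gaussianReal 2).const_mul _
  have hX₂ : Integrable (fun p : ℝ × ℝ => lam * a ^ 2 * p.1 ^ 2) 𝒩₂[V₁, V_w] :=
    ((memLp_id_gaussianReal 2).integrable_sq.comp_fst _).const_mul _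
  have hY₂ : Integrable (fun p : ℝ × ℝ => ((b * a - 1) * p.1 + b * p.2) ^ 2) 𝒩₂[V₁, V_w] :=
    ((hX.comp_fst _).add (hW.comp_snd _)).integrable_sq
  have hcost : ∀ p : ℝ × ℝ, lam * (a * p.1) ^ 2 + (b * (a * p.1 + p.2) - p.1) ^ 2 =
      lam * a ^ 2 * p.1 ^ 2 + ((b * a - 1) * p.1 + b * p.2) ^ 2 := fun p => by ring
  simp only [channelCost, hcost]
  rw [← ofReal_integral_eq_lintegral_ofReal (hX₂.fun_add hY₂) (.of_forall fun p => by positivity),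
    integral_add hX₂ hY₂, integral_const_mul, integral_fun_fst (fun x => x ^ 2),
    integral_comp_fst_add_comp_snd_sq hX hW
      (by rw [integral_const_mul, integral_id_gaussianReal, mul_zero])]
  simp only [mul_pow, integral_const_mul, integral_sq_gaussianReal, probReal_univ, one_smul]
  congr 1
  ring

lemma exists_channelCost_eq_costAtPower {lam : ℝ} (hlam : 0 ≤ lam) (hV₁ : V₁ ≠ 0)
    (hV_w : V_w ≠ 0) {P : ℝ} (hP : 0 ≤ P) :
    ∃ γ₁ γ₂ : ℝ → ℝ, Measurable γ₁ ∧ Measurable γ₂ ∧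
      channelCost lam V₁ V_w γ₁ γ₂ = ENNReal.ofReal (costAtPower lam V₁ V_w P) := by
  -- `a` gives the encoder power `P`; `b` is the least-squares coefficient of `x` on `a x + w`
  set a := √(P / V₁)
  set b := a * V₁ / (P + V_w)
  refine ⟨(a * ·), (b * ·), measurable_const_mul a, measurable_const_mul b, ?_⟩
  rw [channelCost_linear hlam, costAtPower]
  congr 1
  have hPw : (P + V_w : ℝ) ≠ 0 := by positivity
  have ha : a ^ 2 * V₁ = P := by rw [sq_sqrt (by positivity)]; field_simp
  simp only [b, ← ha] at hPw ⊢
  field_simp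
  ring

lemma exists_ofReal_costAtPower_le_channelCost {lam : ℝ} (hlam : 0 < lam) (hV₁ : V₁ ≠ 0)
    (hV_w : V_w ≠ 0) {γ₁ γ₂ : ℝ → ℝ} (hγ₁ : Measurable γ₁) (hγ₂ : Measurable γ₂) :
    ∃ P, 0 ≤ P ∧ ENNReal.ofReal (costAtPower lam V₁ V_w P) ≤ channelCost lam V₁ V_w γ₁ γ₂ := by
  by_cases hfin : channelCost lam V₁ V_w γ₁ γ₂ = ∞
  · exact ⟨0, le_rfl, hfin ▸ le_top⟩
  have hint : Integrable (fun p : ℝ × ℝ => lam * γ₁ p.1 ^ 2 + (γ₂ (γ₁ p.1 + p.2) - p.1) ^ 2)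
      𝒩₂[V₁, V_w] :=
    (lintegral_ofReal_ne_top_iff_integrable (by fun_prop) (.of_forall fun p => by positivity)).1
      hfin
  obtain ⟨hpow, hdist⟩ := (integrable_add_iff_of_nonneg (f := fun p : ℝ × ℝ => lam * γ₁ p.1 ^ 2)
    ((hγ₁.comp measurable_fst).pow_const 2 |>.const_mul lam).aestronglyMeasurable
    (.of_forall fun p => by positivity) (.of_forall fun p => sq_nonneg _)).1 hint
  have hP : Integrable (fun x => γ₁ x ^ 2) (gaussianReal 0 V₁) :=
    (integrable_const_mul_iff (isUnit_iff_ne_zero.2 hlam.ne') _).1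
      ((Integrable.comp_fst_iff (IsProbabilityMeasure.ne_zero _)).1 hpow)
  refine ⟨∫ x, γ₁ x ^ 2 ∂gaussianReal 0 V₁, integral_nonneg fun _ => sq_nonneg _, ?_⟩
  rw [channelCost, ← ofReal_integral_eq_lintegral_ofReal hint (.of_forall fun p => by positivity),
    integral_add hpow hdist, integral_const_mul, integral_fun_fst (fun x => γ₁ x ^ 2),
    probReal_univ, one_smul]
  exact ENNReal.ofReal_le_ofReal (add_le_add le_rfl (div_le_integral_sq_sub hV₁ hV_w hγ₁ hγ₂
    ((memLp_two_iff_integrable_sq hγ₁.aestronglyMeasurable).2 hP) hdist))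

end GaussianChannel

/-- Existence of optimal encoding and decoding strategies for the (soft-constrained)
Gaussian test channel: with `X₁ ∼ N(0,σ₁²)` and `W₂ ∼ N(0,σ_w²)` independent, the cost
`J(γ₁,γ₂) = E[λ·γ₁(X₁)² + (γ₂(γ₁(X₁) + W₂) − X₁)²]` has a finite infimum over Borel
measurable strategy pairs, and the infimum is attained. -/
theorem stmt_18
    (σ₁ σw : ℝ≥0) (hσ₁ : 0 < σ₁) (hσw : 0 < σw)
    (lam : ℝ) (hlam : 0 < lam)
    (J : (ℝ → ℝ) → (ℝ → ℝ) → ℝ≥0∞)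
    (hJ : ∀ γ₁ γ₂ : ℝ → ℝ, J γ₁ γ₂ =
      ∫⁻ p : ℝ × ℝ,
        ENNReal.ofReal (lam * (γ₁ p.1) ^ 2 + (γ₂ (γ₁ p.1 + p.2) - p.1) ^ 2)
        ∂((gaussianReal 0 (σ₁ ^ 2)).prod (gaussianReal 0 (σw ^ 2)))) :
    (⨅ γ : {γ : (ℝ → ℝ) × (ℝ → ℝ) // Measurable γ.1 ∧ Measurable γ.2},
        J γ.1.1 γ.1.2) ≠ ⊤ ∧
    ∃ γ₁ γ₂ : ℝ → ℝ, Measurable γ₁ ∧ Measurable γ₂ ∧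
      J γ₁ γ₂ =
        ⨅ γ : {γ : (ℝ → ℝ) × (ℝ → ℝ) // Measurable γ.1 ∧ Measurable γ.2},
          J γ.1.1 γ.1.2 := by
  obtain rfl : J = channelCost lam (σ₁ ^ 2) (σw ^ 2) := funext₂ hJ
  have hV₁ : σ₁ ^ 2 ≠ 0 := pow_ne_zero 2 hσ₁.ne'
  have hV_w : σw ^ 2 ≠ 0 := pow_ne_zero 2 hσw.ne'
  obtain ⟨P₀, hP₀, hmin⟩ := exists_isMinOn_costAtPower (V₁ := σ₁ ^ 2) hlam hV_w
  obtain ⟨γ₁, γ₂, hγ₁, hγ₂, hcost⟩ :=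
    exists_channelCost_eq_costAtPower hlam.le hV₁ hV_w (P := P₀) hP₀
  have hinf : ⨅ γ : {γ : (ℝ → ℝ) × (ℝ → ℝ) // Measurable γ.1 ∧ Measurable γ.2},
      channelCost lam (σ₁ ^ 2) (σw ^ 2) γ.1.1 γ.1.2 = channelCost lam (σ₁ ^ 2) (σw ^ 2) γ₁ γ₂ := by
    refine le_antisymm (iInf_le_of_le ⟨(γ₁, γ₂), hγ₁, hγ₂⟩ le_rfl) (le_iInf fun γ => ?_)
    obtain ⟨P, hP, hle⟩ :=
      exists_ofReal_costAtPower_le_channelCost hlam hV₁ hV_w γ.2.1 γ.2.2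
    exact hcost ▸ (ENNReal.ofReal_le_ofReal (hmin hP)).trans hle
  exact ⟨hinf ▸ hcost ▸ ENNReal.ofReal_ne_top, γ₁, γ₂, hγ₁, hγ₂, hinf.symm⟩
end
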